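/- arXiv:1911.06115 — 4 statements merged into one kernel-verified Lean document; each statement's English description precedes it below -/
import Mathlib

section
/- Let 1/2 < σ < 1 and t be real, and set s = σ + it. Then the limit L = lim_{k→∞} Σ_{n=1}^{k} Σ_{m=n+1}^{k} (-1)^{m+n} (mn)^{-σ} cos(t·log(m/n)) exists, and |ζ(s)|² = C² · (ζ(2σ) + 2L), where C² = 1/(1 + 2^{2(1-σ)} - 2^{2-σ} cos(t·log 2)). -/
open Complex Real Finset Filter Topology

noncomputable def myEta (s : ℂ) : ℂ :=
  ∑' j : ℕ, (((2*j+1 : ℕ) : ℂ)^(-s) - ((2*j+2 : ℕ) : ℂ)^(-s))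

lemma hasDeriv_cpow (s : ℂ) (hs : s ≠ 0) {x : ℝ} (hx : 0 < x) :
    HasDerivAt (fun y : ℝ => (y:ℂ)^(-s)) (-s * (x:ℂ)^(-s-1)) x := by
  have hr : (-s - 1 : ℂ) ≠ -1 := by
    intro h
    apply hs
    have : -s = 0 := by linear_combination h
    simpa [neg_eq_zero] using this
  have h := hasDerivAt_ofReal_cpow_const' hx.ne' hr
  have h2 := h.const_mul (-s)
  have hne : (-s : ℂ) ≠ 0 := neg_ne_zero.mpr hs
  have heq : (fun y : ℝ => -s * ((y:ℂ)^(-s-1+1)/(-s-1+1))) = fun y : ℝ => (y:ℂ)^(-s) := by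
    funext y
    have : (-s - 1 + 1 : ℂ) = -s := by ring
    rw [this, mul_div_cancel₀ _ hne]
  rw [heq] at h2
  exact h2

lemma cpow_diff_bound (s : ℂ) (hs : s ≠ 0) (a : ℝ) (ha : 0 ≤ a) (has : a ≤ s.re) (j : ℕ) :
    ‖((2*j+1 : ℕ) : ℂ)^(-s) - ((2*j+2 : ℕ) : ℂ)^(-s)‖ ≤ ‖s‖ * (2*(j:ℝ)+1)^(-a-1) := by
  have hx : (0:ℝ) < 2*(j:ℝ)+1 := by positivity
  have key := Convex.norm_image_sub_le_of_norm_hasDerivWithin_le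
    (𝕜 := ℝ) (f := fun y : ℝ => (y:ℂ)^(-s)) (f' := fun y : ℝ => -s * (y:ℂ)^(-s-1))
    (s := Set.Icc (2*(j:ℝ)+1) (2*(j:ℝ)+2)) (C := ‖s‖ * (2*(j:ℝ)+1)^(-a-1))
    (fun y hy => ((hasDeriv_cpow s hs (lt_of_lt_of_le hx hy.1)).hasDerivWithinAt))
    ?_ (convex_Icc _ _) (Set.left_mem_Icc.mpr (by linarith)) (Set.right_mem_Icc.mpr (by linarith))
  · have : ‖(((2*(j:ℝ)+2 : ℝ)):ℂ)^(-s) - (((2*(j:ℝ)+1 : ℝ)):ℂ)^(-s)‖ ≤ ‖s‖ * (2*(j:ℝ)+1)^(-a-1) := by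
      have h2 : ‖(2*(j:ℝ)+2) - (2*(j:ℝ)+1)‖ = 1 := by norm_num
      calc _ ≤ ‖s‖ * (2*(j:ℝ)+1)^(-a-1) * ‖(2*(j:ℝ)+2) - (2*(j:ℝ)+1)‖ := key
        _ = _ := by rw [h2, mul_one]
    rw [norm_sub_rev]
    convert this using 4 <;> push_cast <;> rfl
  · intro y hy
    have hy0 : (0:ℝ) < y := lt_of_lt_of_le hx hy.1
    rw [norm_mul, norm_neg]
    gcongr ‖s‖ * ?_
    rw [Complex.norm_cpow_eq_rpow_re_of_pos hy0]
    have h1 : (-s-1).re = -s.re - 1 := by simp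
    rw [h1]
    calc y ^ (-s.re - 1) ≤ (2*(j:ℝ)+1) ^ (-s.re-1) := by
          apply Real.rpow_le_rpow_of_nonpos hx hy.1
          linarith
      _ ≤ (2*(j:ℝ)+1) ^ (-a-1) := by
          apply Real.rpow_le_rpow_of_exponent_le (by linarith)
          linarith

lemma summable_bound {a : ℝ} (ha : 0 < a) (M : ℝ) :
    Summable (fun j : ℕ => M * (2*(j:ℝ)+1)^(-a-1)) := by
  apply Summable.mul_left
  have h1 : Summable (fun n : ℕ => ((n:ℝ))^(-a-1)) :=
    Real.summable_nat_rpow.mpr (by linarith)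
  have h2 : Summable (fun n : ℕ => (((n:ℕ)+1:ℝ))^(-a-1)) := by
    have := (summable_nat_add_iff (f := fun n : ℕ => ((n:ℝ))^(-a-1)) 1).mpr h1
    simpa using this
  apply h2.of_nonneg_of_le (fun j => by positivity)
  intro j
  apply Real.rpow_le_rpow_of_nonpos (by positivity) (by push_cast; linarith) (by linarith)

lemma mySummable {s : ℂ} (hs : 0 < s.re) :
    Summable (fun j : ℕ => ((2*j+1 : ℕ) : ℂ)^(-s) - ((2*j+2 : ℕ) : ℂ)^(-s)) := by
  apply Summable.of_norm
  apply (summable_bound hs ‖s‖).of_nonneg_of_le (fun j => norm_nonneg _)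
  exact fun j => cpow_diff_bound s (fun h => by simp [h] at hs) s.re hs.le le_rfl j

lemma myEta_diffAt {s₀ : ℂ} (h : 1/2 < s₀.re) : DifferentiableAt ℂ myEta s₀ := by
  set r : ℝ := (s₀.re - 1/2)/2 with hr
  have hr0 : 0 < r := by simp [hr]; linarith
  set a : ℝ := s₀.re - r with hadef
  have ha : 0 < a := by simp [hadef, hr]; linarith
  set M : ℝ := ‖s₀‖ + r with hM
  have hsub : ∀ s ∈ Metric.ball s₀ r, a ≤ s.re ∧ ‖s‖ ≤ M := by
    intro s hs
    rw [Metric.mem_ball, dist_eq_norm] at hs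
    have h1 : |(s - s₀).re| ≤ ‖s - s₀‖ := Complex.abs_re_le_norm _
    have h2 : |s.re - s₀.re| < r := by
      rw [← Complex.sub_re]; exact lt_of_le_of_lt h1 hs
    rw [abs_lt] at h2
    constructor
    · simp only [hadef]; linarith [h2.1]
    · have := norm_sub_norm_le s s₀
      linarith
  have hdiff : DifferentiableOn ℂ myEta (Metric.ball s₀ r) := by
    have hTU : TendstoUniformlyOn
        (fun (T : Finset ℕ) s => ∑ j ∈ T, (((2*j+1 : ℕ) : ℂ)^(-s) - ((2*j+2 : ℕ) : ℂ)^(-s)))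
        myEta atTop (Metric.ball s₀ r) := by
      apply tendstoUniformlyOn_tsum (summable_bound ha M)
      intro j s hs
      calc ‖((2*j+1 : ℕ) : ℂ)^(-s) - ((2*j+2 : ℕ) : ℂ)^(-s)‖
          ≤ ‖s‖ * (2*(j:ℝ)+1)^(-a-1) := by
            apply cpow_diff_bound s ?_ a ha.le (hsub s hs).1 j
            intro h0
            have := (hsub s hs).1
            rw [h0] at this; simp at this; linarith
        _ ≤ M * (2*(j:ℝ)+1)^(-a-1) :=
            mul_le_mul_of_nonneg_right (hsub s hs).2 (by positivity)
    apply hTU.tendstoLocallyUniformlyOn.differentiableOn ?_ Metric.isOpen_ball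
    filter_upwards with T
    apply DifferentiableOn.fun_sum
    intro j _
    apply DifferentiableOn.sub <;>
    · apply Differentiable.differentiableOn
      apply Differentiable.const_cpow _ (Or.inl (Nat.cast_ne_zero.mpr (by omega)))
      exact differentiable_neg
  exact (hdiff.differentiableAt (Metric.ball_mem_nhds s₀ hr0))

lemma myEta_eq_of_one_lt {s : ℂ} (hs : 1 < s.re) :
    myEta s = (1 - 2^(1-s)) * riemannZeta s := by
  have hs0 : s ≠ 0 := fun h => by simp [h] at hs; linarith
  set f : ℕ → ℂ := fun n => ((n:ℕ):ℂ)^(-s) with hf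
  have hsumf : Summable f := by
    have := (Complex.summable_one_div_nat_cpow (p := s)).mpr hs
    apply this.congr
    intro n
    rw [hf, one_div, ← Complex.cpow_neg]
  have hzeta : riemannZeta s = ∑' n, f n := by
    rw [zeta_eq_tsum_one_div_nat_cpow hs]
    congr 1; funext n; rw [hf, one_div, ← Complex.cpow_neg]
  have hdouble : ∀ j : ℕ, f (2*j) = 2^(-s) * f j := by
    intro j
    rcases Nat.eq_zero_or_pos j with rfl | hj
    · simp [hf, Complex.zero_cpow (neg_ne_zero.mpr hs0)]
    · rw [hf]
      simp only []
      rw [show ((2*j:ℕ):ℂ) = ((2:ℝ):ℂ) * ((j:ℝ):ℂ) by push_cast; ring,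
        Complex.mul_cpow_ofReal_nonneg (by norm_num) (Nat.cast_nonneg j)]
      norm_num
  have hsum_even : Summable (fun j => f (2*j)) := by
    simp_rw [hdouble]; exact hsumf.mul_left _
  have heven : ∑' j, f (2*j) = 2^(-s) * riemannZeta s := by
    simp_rw [hdouble]; rw [tsum_mul_left, hzeta]
  have hsum_odd : Summable (fun j => f (2*j+1)) :=
    hsumf.comp_injective (fun a b hab => by omega)
  have hodd : ∑' j, f (2*j+1) = (1 - 2^(-s)) * riemannZeta s := by
    have := tsum_even_add_odd hsum_even hsum_odd
    rw [heven, ← hzeta] at this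
    linear_combination this
  have hsum_even2 : Summable (fun j => f (2*j+2)) :=
    hsumf.comp_injective (fun a b hab => by omega)
  have heven2 : ∑' j, f (2*j+2) = 2^(-s) * riemannZeta s := by
    have h0 : ∑' j, f (2*j) = f 0 + ∑' j, f (2*(j+1)) := Summable.tsum_eq_zero_add hsum_even
    have hf0 : f 0 = 0 := by simp [hf, Complex.zero_cpow (neg_ne_zero.mpr hs0)]
    rw [hf0, zero_add] at h0
    rw [← heven, h0]
    congr 1
  have : myEta s = ∑' j, f (2*j+1) - ∑' j, f (2*j+2) := by
    have h1 : myEta s = ∑' j, (f (2*j+1) - f (2*j+2)) := rfl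
    rw [h1, Summable.tsum_sub hsum_odd hsum_even2]
  rw [this, hodd, heven2]
  have h2 : (2:ℂ)^(1-s) = 2 * 2^(-s) := by
    rw [show (1-s : ℂ) = 1 + (-s) by ring, Complex.cpow_add _ _ (by norm_num), Complex.cpow_one]
  rw [h2]; ring

lemma U_preconnected : IsPreconnected {s : ℂ | 1/2 < s.re ∧ s ≠ 1} := by
  have hA : Convex ℝ {s : ℂ | 1/2 < s.re ∧ s.re < 1} :=
    (convex_halfSpace_re_gt (1/2)).inter (convex_halfSpace_re_lt 1)
  have hB : Convex ℝ {s : ℂ | 1 < s.re} := convex_halfSpace_re_gt 1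
  have hC : Convex ℝ {s : ℂ | 1/2 < s.re ∧ 0 < s.im} :=
    (convex_halfSpace_re_gt (1/2)).inter (convex_halfSpace_im_gt 0)
  have hD : Convex ℝ {s : ℂ | 1/2 < s.re ∧ s.im < 0} :=
    (convex_halfSpace_re_gt (1/2)).inter (convex_halfSpace_im_lt 0)
  have hUnion : {s : ℂ | 1/2 < s.re ∧ s ≠ 1} =
      (({s : ℂ | 1/2 < s.re ∧ s.re < 1} ∪ {s : ℂ | 1/2 < s.re ∧ 0 < s.im}) ∪ {s : ℂ | 1 < s.re})
        ∪ {s : ℂ | 1/2 < s.re ∧ s.im < 0} := by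
    ext s
    simp only [Set.mem_setOf_eq, Set.mem_union]
    constructor
    · rintro ⟨h1, h2⟩
      rcases lt_trichotomy s.im 0 with him | him | him
      · exact Or.inr ⟨h1, him⟩
      · rcases lt_trichotomy s.re 1 with hre | hre | hre
        · exact Or.inl (Or.inl (Or.inl ⟨h1, hre⟩))
        · exact absurd (Complex.ext hre him) h2
        · exact Or.inl (Or.inr hre)
      · exact Or.inl (Or.inl (Or.inr ⟨h1, him⟩))
    · rintro ((( ⟨h1, h2⟩ | ⟨h1, h2⟩) | h1) | ⟨h1, h2⟩)
      · exact ⟨h1, fun h => by rw [h] at h2; simp at h2⟩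
      · exact ⟨h1, fun h => by rw [h] at h2; simp at h2⟩
      · exact ⟨by linarith, fun h => by rw [h] at h1; simp at h1⟩
      · exact ⟨h1, fun h => by rw [h] at h2; simp at h2⟩
  rw [hUnion]
  apply IsPreconnected.union (3/4 - (1/2 : ℝ) * I)
  · left; left
    constructor
    · norm_num
    · norm_num
  · constructor
    · norm_num
    · norm_num
  · apply IsPreconnected.union (2 + I)
    · right
      norm_num
    · norm_num
    · apply IsPreconnected.union ((3/4 : ℝ) + (1/2 : ℝ) * I)
      · constructor
        · norm_num
        · norm_num
      · constructor
        · norm_num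
        · norm_num
      · exact hA.isPreconnected
      · exact hC.isPreconnected
    · exact hB.isPreconnected
  · exact hD.isPreconnected

lemma myEta_eq {s : ℂ} (hs : 1/2 < s.re) (hs1 : s ≠ 1) :
    myEta s = (1 - 2^(1-s)) * riemannZeta s := by
  set U : Set ℂ := {s : ℂ | 1/2 < s.re ∧ s ≠ 1} with hU
  have hopen : IsOpen U := by
    have : U = (Complex.re ⁻¹' Set.Ioi (1/2)) ∩ {(1:ℂ)}ᶜ := by
      ext z; simp [hU, Set.mem_setOf_eq]
    rw [this]
    exact (isOpen_Ioi.preimage Complex.continuous_re).inter isOpen_compl_singleton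
  have hg : DifferentiableOn ℂ (fun z => (1 - 2^(1-z)) * riemannZeta z) U := by
    intro z hz
    apply DifferentiableAt.differentiableWithinAt
    apply DifferentiableAt.mul
    · apply DifferentiableAt.sub (differentiableAt_const _)
      apply DifferentiableAt.const_cpow _ (Or.inl two_ne_zero)
      exact (differentiableAt_const _).sub differentiableAt_id
    · exact differentiableAt_riemannZeta hz.2
  have hf : DifferentiableOn ℂ myEta U := fun z hz =>
    (myEta_diffAt hz.1).differentiableWithinAt
  have h2U : (2 : ℂ) ∈ U := by
    constructor
    · norm_num
    · norm_num
  have hev : myEta =ᶠ[𝓝 (2:ℂ)] (fun z => (1 - 2^(1-z)) * riemannZeta z) := by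
    have hmem : {z : ℂ | 1 < z.re} ∈ 𝓝 (2:ℂ) := by
      apply (isOpen_Ioi.preimage Complex.continuous_re).mem_nhds
      norm_num
    filter_upwards [hmem] with z hz
    exact myEta_eq_of_one_lt hz
  exact (hf.analyticOnNhd hopen).eqOn_of_preconnected_of_eventuallyEq
    (hg.analyticOnNhd hopen) U_preconnected h2U hev ⟨hs, hs1⟩

lemma partial_eq (s : ℂ) (N : ℕ) :
    ∑ j ∈ range N, (((2*j+1 : ℕ) : ℂ)^(-s) - ((2*j+2 : ℕ) : ℂ)^(-s))
      = ∑ n ∈ Icc 1 (2*N), (-1:ℂ)^(n+1) * ((n:ℕ):ℂ)^(-s) := by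
  induction N with
  | zero => simp
  | succ N ih =>
    rw [Finset.sum_range_succ, ih, show 2*(N+1) = (2*N+1)+1 by ring,
      Finset.sum_Icc_succ_top (by omega), Finset.sum_Icc_succ_top (by omega)]
    have h1 : (-1:ℂ)^(2*N+1+1) = 1 := by
      rw [pow_succ, pow_succ]
      simp [pow_mul]
    have h2 : (-1:ℂ)^(2*N+1+1+1) = -1 := by
      rw [pow_succ, h1]; ring
    rw [h1, h2]
    push_cast
    rw [show (2*(N:ℂ)+1+1) = 2*(N:ℂ)+2 by ring]
    ring

lemma norm_term_tendsto {s : ℂ} (hs : 0 < s.re) :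
    Tendsto (fun n : ℕ => ‖(-1:ℂ)^(n+1) * ((n:ℕ):ℂ)^(-s)‖) atTop (𝓝 0) := by
  have h : ∀ n : ℕ, 1 ≤ n → ‖(-1:ℂ)^(n+1) * ((n:ℕ):ℂ)^(-s)‖ = ((n:ℝ))^(-s.re) := by
    intro n hn
    rw [norm_mul, norm_pow, norm_neg, norm_one, one_pow, one_mul,
      show ((n:ℕ):ℂ) = ((n:ℝ):ℂ) by norm_cast,
      Complex.norm_cpow_eq_rpow_re_of_pos (by exact_mod_cast hn : (0:ℝ) < n)]
    simp
  have h2 : Tendsto (fun n : ℕ => ((n:ℝ))^(-s.re)) atTop (𝓝 0) := by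
    have := tendsto_rpow_neg_atTop hs
    exact this.comp tendsto_natCast_atTop_atTop
  apply h2.congr'
  filter_upwards [eventually_ge_atTop 1] with n hn
  exact (h n hn).symm

lemma partial_tendsto {s : ℂ} (hs : 0 < s.re) :
    Tendsto (fun k : ℕ => ∑ n ∈ Icc 1 k, (-1:ℂ)^(n+1) * ((n:ℕ):ℂ)^(-s)) atTop (𝓝 (myEta s)) := by
  have hsum := mySummable hs
  have heven : Tendsto (fun N : ℕ => ∑ n ∈ Icc 1 (2*N), (-1:ℂ)^(n+1) * ((n:ℕ):ℂ)^(-s))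
      atTop (𝓝 (myEta s)) := by
    have := hsum.hasSum.tendsto_sum_nat
    apply this.congr
    intro N
    exact partial_eq s N
  rw [Metric.tendsto_atTop]
  intro ε hε
  rw [Metric.tendsto_atTop] at heven
  obtain ⟨N₁, hN₁⟩ := heven (ε/2) (by linarith)
  have hnorm := norm_term_tendsto hs
  rw [Metric.tendsto_atTop] at hnorm
  obtain ⟨N₂, hN₂⟩ := hnorm (ε/2) (by linarith)
  refine ⟨2*N₁ + N₂ + 2, fun k hk => ?_⟩
  rcases Nat.even_or_odd k with ⟨m, hm⟩ | ⟨m, hm⟩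
  · have hm1 : m ≥ N₁ := by omega
    have := hN₁ m hm1
    rw [hm, show m + m = 2*m by ring]
    exact lt_trans this (by linarith)
  · have hm1 : m ≥ N₁ := by omega
    have hm2 : 2*m+1 ≥ N₂ := by omega
    have key : ∀ (S a η : ℂ), dist (S + a) η ≤ ‖a‖ + dist S η := by
      intro S a η
      rw [dist_eq_norm, dist_eq_norm]
      calc ‖S + a - η‖ = ‖a + (S - η)‖ := by ring_nf
        _ ≤ _ := norm_add_le _ _
    rw [hm, Finset.sum_Icc_succ_top (by omega : 1 ≤ 2*m+1)]
    calc dist ((∑ n ∈ Icc 1 (2*m), (-1:ℂ)^(n+1) * ((n:ℕ):ℂ)^(-s)) + (-1:ℂ)^(2*m+1+1) * ((2*m+1 : ℕ):ℂ)^(-s)) (myEta s)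
        ≤ ‖(-1:ℂ)^(2*m+1+1) * (((2*m+1 : ℕ)):ℂ)^(-s)‖ + dist (∑ n ∈ Icc 1 (2*m), (-1:ℂ)^(n+1) * ((n:ℕ):ℂ)^(-s)) (myEta s) := key _ _ _
      _ < ε/2 + ε/2 := by
          have ha := hN₂ (2*m+1) hm2
          rw [Real.dist_eq, sub_zero] at ha
          have hb := hN₁ m hm1
          have habs : |‖(-1:ℂ)^(2*m+1+1) * ((2*m+1 : ℕ):ℂ)^(-s)‖| = ‖(-1:ℂ)^(2*m+1+1) * ((2*m+1 : ℕ):ℂ)^(-s)‖ := abs_of_nonneg (norm_nonneg _)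
          push_cast at ha habs ⊢
          linarith [hb]
      _ = ε := by ring

lemma natCpow_eq (σ t : ℝ) {n : ℕ} (hn : 1 ≤ n) :
    ((n:ℕ):ℂ)^(-((σ:ℂ) + (t:ℂ)*I)) =
      (((n:ℝ)^(-σ) : ℝ) : ℂ) * Complex.exp ((↑(-(t * Real.log n)) : ℂ) * I) := by
  have hn0 : (0:ℝ) < n := by exact_mod_cast hn
  have hlog : Complex.log ((n:ℕ):ℂ) = ((Real.log n : ℝ) : ℂ) := by
    rw [show ((n:ℕ):ℂ) = (((n:ℝ)):ℂ) by norm_cast, Complex.ofReal_log hn0.le]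
  rw [Complex.cpow_def_of_ne_zero (by exact_mod_cast hn0.ne'), hlog]
  rw [show ((Real.log n : ℝ):ℂ) * -((σ:ℂ) + (t:ℂ)*I)
      = ((-(σ * Real.log n) : ℝ) : ℂ) + ((-(t * Real.log n) : ℝ):ℂ) * I by push_cast; ring]
  rw [Complex.exp_add, ← Complex.ofReal_exp]
  congr 2
  rw [Real.rpow_def_of_pos hn0]
  ring_nf

lemma re_prod (σ t : ℝ) {m n : ℕ} (hm : 1 ≤ m) (hn : 1 ≤ n) :
    ((-1:ℂ)^(m+1) * ((m:ℕ):ℂ)^(-((σ:ℂ) + (t:ℂ)*I))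
      * (starRingEnd ℂ) ((-1:ℂ)^(n+1) * ((n:ℕ):ℂ)^(-((σ:ℂ) + (t:ℂ)*I)))).re
      = (-1:ℝ)^(m+n) * ((m:ℝ) * (n:ℝ))^(-σ) * Real.cos (t * Real.log ((m:ℝ)/(n:ℝ))) := by
  have hm0 : (0:ℝ) < m := by exact_mod_cast hm
  have hn0 : (0:ℝ) < n := by exact_mod_cast hn
  set a : ℝ := (m:ℝ)^(-σ) with ha
  set b : ℝ := (n:ℝ)^(-σ) with hb
  set u : ℝ := t * Real.log m with hu
  set v : ℝ := t * Real.log n with hv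
  rw [natCpow_eq σ t hm, natCpow_eq σ t hn]
  have hconj : (starRingEnd ℂ) ((-1:ℂ)^(n+1) * ((b : ℝ):ℂ) * Complex.exp ((↑(-v) : ℂ) * I))
      = (-1:ℂ)^(n+1) * ((b:ℝ):ℂ) * Complex.exp ((↑v : ℂ) * I) := by
    rw [map_mul, map_mul, map_pow, map_neg, map_one, Complex.conj_ofReal, ← Complex.exp_conj]
    congr 2
    simp [Complex.conj_I]
  rw [show (-1:ℂ)^(n+1) * (((b : ℝ):ℂ) * Complex.exp ((↑(-v) : ℂ) * I))
      = (-1:ℂ)^(n+1) * ((b : ℝ):ℂ) * Complex.exp ((↑(-v) : ℂ) * I) by ring, hconj]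
  have hkey : (-1:ℂ)^(m+1) * (((a : ℝ):ℂ) * Complex.exp ((↑(-u) : ℂ) * I))
      * ((-1:ℂ)^(n+1) * ((b:ℝ):ℂ) * Complex.exp ((↑v : ℂ) * I))
      = ((((-1:ℝ)^(m+n) * (a*b)) : ℝ) : ℂ) * Complex.exp ((↑(v-u) : ℂ) * I) := by
    rw [show Complex.exp ((↑(v-u) : ℂ) * I) = Complex.exp ((↑(-u):ℂ) * I) * Complex.exp ((↑v:ℂ)*I) by
      rw [← Complex.exp_add]; congr 1; push_cast; ring]
    push_cast
    ring
  rw [hkey, Complex.re_ofReal_mul, Complex.exp_ofReal_mul_I_re]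
  have hcos : Real.cos (v - u) = Real.cos (t * Real.log ((m:ℝ)/(n:ℝ))) := by
    rw [Real.log_div hm0.ne' hn0.ne', show v - u = -(t * (Real.log m - Real.log n)) by
      rw [hu, hv]; ring, Real.cos_neg]
  have hab : a * b = ((m:ℝ) * (n:ℝ))^(-σ) := (Real.mul_rpow hm0.le hn0.le).symm
  rw [hcos, hab]

lemma sym_split (k : ℕ) (c : ℕ → ℕ → ℝ) (hsym : ∀ m n, c m n = c n m) :
    ∑ n ∈ Icc 1 k, ∑ m ∈ Icc 1 k, c m n
      = (∑ n ∈ Icc 1 k, c n n) + 2 * ∑ n ∈ Icc 1 k, ∑ m ∈ Icc (n+1) k, c m n := by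
  have h1 : ∀ n ∈ Icc 1 k, ∑ m ∈ Icc 1 k, c m n
      = ((∑ m ∈ Ico 1 n, c m n) + c n n) + ∑ m ∈ Ico (n+1) (k+1), c m n := by
    intro n hn
    simp only [Finset.mem_Icc] at hn
    rw [← Finset.Ico_add_one_right_eq_Icc,
      ← Finset.sum_Ico_consecutive _ (by omega : 1 ≤ n) (by omega : n ≤ k+1),
      Finset.sum_eq_sum_Ico_succ_bot (by omega : n < k+1)]
    ring
  rw [Finset.sum_congr rfl h1, Finset.sum_add_distrib, Finset.sum_add_distrib]
  have h2 : ∑ n ∈ Icc 1 k, ∑ m ∈ Ico 1 n, c m n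
      = ∑ n ∈ Icc 1 k, ∑ m ∈ Ico (n+1) (k+1), c m n := by
    have h3 := Finset.sum_Ico_Ico_comm' 1 (k+1) (fun i j => c j i)
    rw [← Finset.Ico_add_one_right_eq_Icc] at *
    calc ∑ n ∈ Ico 1 (k+1), ∑ m ∈ Ico 1 n, c m n
        = ∑ n ∈ Ico 1 (k+1), ∑ m ∈ Ico 1 n, c n m :=
          Finset.sum_congr rfl (fun n _ => Finset.sum_congr rfl (fun m _ => hsym m n))
      _ = ∑ n ∈ Ico 1 (k+1), ∑ m ∈ Ico (n+1) (k+1), c m n := h3.symm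
  have h4 : ∀ n, ∑ m ∈ Ico (n+1) (k+1), c m n = ∑ m ∈ Icc (n+1) k, c m n := by
    intro n; rw [Finset.Ico_add_one_right_eq_Icc]
  simp_rw [h4] at h2 ⊢
  rw [h2]
  ring

lemma sq_expand_abstract (k : ℕ) (a : ℕ → ℂ) (c : ℕ → ℕ → ℝ)
    (hre : ∀ m ∈ Icc 1 k, ∀ n ∈ Icc 1 k, (a m * (starRingEnd ℂ) (a n)).re = c m n)
    (hsym : ∀ m n, c m n = c n m) :
    (‖∑ n ∈ Icc 1 k, a n‖)^2
      = (∑ n ∈ Icc 1 k, c n n) + 2 * ∑ n ∈ Icc 1 k, ∑ m ∈ Icc (n+1) k, c m n := by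
  have h1 : (‖∑ n ∈ Icc 1 k, a n‖)^2
      = ((∑ n ∈ Icc 1 k, a n) * (starRingEnd ℂ) (∑ n ∈ Icc 1 k, a n)).re := by
    rw [Complex.mul_conj, Complex.sq_norm, Complex.ofReal_re]
  rw [h1, map_sum, Finset.sum_mul_sum, Complex.re_sum]
  rw [← sym_split k c hsym]
  apply Finset.sum_congr rfl
  intro m hm
  rw [Complex.re_sum]
  apply Finset.sum_congr rfl
  intro n hn
  rw [hre m hm n hn]
  exact hsym m n

lemma diag_tendsto {σ : ℝ} (h : 1/2 < σ) :
    Tendsto (fun k : ℕ => ∑ n ∈ Icc 1 k, ((n:ℝ))^(-(2*σ))) atTop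
      (𝓝 (∑' n : ℕ, ((n:ℝ))^(-(2*σ)))) := by
  have hsum : Summable (fun n : ℕ => ((n:ℝ))^(-(2*σ))) :=
    Real.summable_nat_rpow.mpr (by linarith)
  have h0 := hsum.hasSum.tendsto_sum_nat
  have heq : ∀ k : ℕ, ∑ n ∈ range (k+1), ((n:ℝ))^(-(2*σ))
      = ∑ n ∈ Icc 1 k, ((n:ℝ))^(-(2*σ)) := by
    intro k
    rw [Finset.range_eq_Ico, Finset.sum_eq_sum_Ico_succ_bot (by omega)]
    norm_num [Real.zero_rpow (by intro hc; linarith : -(2*σ) ≠ 0), Finset.Ico_add_one_right_eq_Icc]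
  have h2 := h0.comp (tendsto_add_atTop_nat 1)
  exact h2.congr (fun k => heq k)

lemma zeta_two_sigma {σ : ℝ} (h : 1/2 < σ) :
    riemannZeta (2*(σ:ℂ)) = ((∑' n : ℕ, ((n:ℝ))^(-(2*σ)) : ℝ) : ℂ) := by
  have hre : (2*(σ:ℂ)).re = 2*σ := by simp
  rw [zeta_eq_tsum_one_div_nat_cpow (by rw [hre]; linarith), Complex.ofReal_tsum]
  congr 1; funext n
  rcases Nat.eq_zero_or_pos n with rfl | hn
  · rw [Nat.cast_zero, Complex.zero_cpow (by
      intro hc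
      have := congrArg Complex.re hc
      rw [hre] at this
      simp at this; linarith), Nat.cast_zero,
      Real.zero_rpow (by intro hc; linarith : -(2*σ) ≠ 0)]
    simp
  · have hn0 : (0:ℝ) < n := by exact_mod_cast hn
    rw [show (2*(σ:ℂ)) = ((2*σ : ℝ):ℂ) by push_cast; ring,
      show ((n:ℕ):ℂ) = (((n:ℝ)):ℂ) by norm_cast,
      ← Complex.ofReal_cpow hn0.le,
      Real.rpow_neg hn0.le]
    push_cast
    rw [one_div]

lemma one_sub_ne (σ t : ℝ) (h2 : σ < 1) :
    (1:ℂ) - (2:ℂ)^((1:ℂ)-((σ:ℂ)+(t:ℂ)*I)) ≠ 0 := by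
  intro hc
  have h1 : (2:ℂ)^((1:ℂ)-((σ:ℂ)+(t:ℂ)*I)) = 1 := by linear_combination -hc
  have h2' : ‖(2:ℂ)^((1:ℂ)-((σ:ℂ)+(t:ℂ)*I))‖ = (2:ℝ)^(1-σ) := by
    rw [show (2:ℂ) = ((2:ℝ):ℂ) by norm_num, Complex.norm_cpow_eq_rpow_re_of_pos (by norm_num)]
    congr 1
    simp
  rw [h1] at h2'
  simp at h2'
  have : (1:ℝ) < (2:ℝ)^(1-σ) := by
    calc (1:ℝ) = (2:ℝ)^(0:ℝ) := by norm_num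
    _ < (2:ℝ)^(1-σ) := Real.rpow_lt_rpow_of_exponent_lt (by norm_num) (by linarith)
  rw [← h2'] at this
  linarith

lemma denom_eq (σ t : ℝ) :
    (‖(1:ℂ) - (2:ℂ)^((1:ℂ)-((σ:ℂ)+(t:ℂ)*I))‖)^2
      = 1 + 2^(2*(1-σ)) - 2^(2-σ) * Real.cos (t * Real.log 2) := by
  set A : ℝ := (2:ℝ)^(1-σ) with hA
  set θ : ℝ := t * Real.log 2 with hθ
  have hz : (2:ℂ)^((1:ℂ)-((σ:ℂ)+(t:ℂ)*I))
      = (↑(A * Real.cos θ) : ℂ) - (↑(A * Real.sin θ) : ℂ) * I := by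
    have h1 : ((1:ℂ)-((σ:ℂ)+(t:ℂ)*I)) = -((((σ-1:ℝ)):ℂ) + (t:ℂ)*I) := by push_cast; ring
    have h2 : (2:ℂ) = ((2:ℕ):ℂ) := by norm_num
    rw [h1, h2, natCpow_eq (σ-1) t (by norm_num : 1 ≤ 2)]
    rw [Complex.exp_mul_I, ← Complex.ofReal_cos, ← Complex.ofReal_sin]
    rw [Real.cos_neg, Real.sin_neg]
    have h3 : ((2:ℕ):ℝ) = (2:ℝ) := by norm_num
    rw [h3, show -(σ-1) = 1-σ by ring]
    push_cast [← hA, ← hθ]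
    ring
  rw [hz]
  have h4 : (1:ℂ) - ((↑(A * Real.cos θ):ℂ) - (↑(A * Real.sin θ):ℂ) * I)
      = (↑(1 - A * Real.cos θ) : ℂ) + (↑(A * Real.sin θ) : ℂ) * I := by push_cast; ring
  rw [h4, Complex.sq_norm, Complex.normSq_add_mul_I]
  have hA2 : A^2 = 2^(2*(1-σ)) := by
    rw [hA, ← Real.rpow_natCast ((2:ℝ)^(1-σ)) 2, ← Real.rpow_mul (by norm_num)]
    norm_num
    ring_nf
  have h2A : 2*A = 2^(2-σ) := by
    rw [hA, show (2-σ:ℝ) = 1 + (1-σ) by ring, Real.rpow_add (by norm_num), Real.rpow_one]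
  rw [← hA2, ← h2A]
  linear_combination (A^2) * Real.sin_sq_add_cos_sq θ

theorem stmt_6 (σ t : ℝ) (h1 : 1 / 2 < σ) (h2 : σ < 1) :
    ∃ L : ℝ,
      Tendsto (fun k : ℕ => ∑ n ∈ Finset.Icc 1 k, ∑ m ∈ Finset.Icc (n + 1) k,
          (-1 : ℝ) ^ (m + n) * ((m * n : ℝ)) ^ (-σ)
            * Real.cos (t * Real.log ((m : ℝ) / n))) atTop (𝓝 L) ∧
      ((‖riemannZeta (σ + t * Complex.I)‖) ^ 2 : ℂ)
        = ((1 / (1 + 2 ^ (2 * (1 - σ)) - 2 ^ (2 - σ) * Real.cos (t * Real.log 2)) : ℝ) : ℂ)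
            * (riemannZeta (2 * σ) + 2 * (L : ℂ)) := by
  set s : ℂ := (σ:ℂ) + (t:ℂ) * I with hsdef
  have hre : s.re = σ := by simp [hsdef]
  have hs2 : 1/2 < s.re := by rw [hre]; exact h1
  have hs0 : 0 < s.re := by rw [hre]; linarith
  have hs1 : s ≠ 1 := by
    intro hc
    have := congrArg Complex.re hc
    rw [hre] at this
    simp at this
    linarith
  set a : ℕ → ℂ := fun n => (-1:ℂ)^(n+1) * ((n:ℕ):ℂ)^(-s) with hadef
  set c : ℕ → ℕ → ℝ := fun m n =>
    (-1 : ℝ) ^ (m + n) * ((m * n : ℝ)) ^ (-σ) * Real.cos (t * Real.log ((m : ℝ) / n)) with hcdef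
  have hsym : ∀ m n, c m n = c n m := by
    intro m n
    have hcos : Real.cos (t * Real.log ((m:ℝ)/n)) = Real.cos (t * Real.log ((n:ℝ)/m)) := by
      rcases Nat.eq_zero_or_pos m with rfl | hm
      · rcases Nat.eq_zero_or_pos n with rfl | hn
        · rfl
        · simp
      · rcases Nat.eq_zero_or_pos n with rfl | hn
        · simp
        · have hm0 : ((m:ℝ)) ≠ 0 := by positivity
          have hn0 : ((n:ℝ)) ≠ 0 := by positivity
          rw [show (m:ℝ)/n = ((n:ℝ)/m)⁻¹ by rw [inv_div], Real.log_inv, mul_neg, Real.cos_neg]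
    simp only [hcdef]
    rw [hcos]
    try ring_nf
  -- square expansion for every k
  have hexp : ∀ k : ℕ, (‖∑ n ∈ Icc 1 k, a n‖)^2
      = (∑ n ∈ Icc 1 k, ((n:ℝ))^(-(2*σ))) + 2 * ∑ n ∈ Icc 1 k, ∑ m ∈ Icc (n+1) k, c m n := by
    intro k
    have hre2 : ∀ m ∈ Icc 1 k, ∀ n ∈ Icc 1 k, (a m * (starRingEnd ℂ) (a n)).re = c m n := by
      intro m hm n hn
      simp only [Finset.mem_Icc] at hm hn
      rw [hadef]
      simp only []
      rw [hsdef, re_prod σ t hm.1 hn.1, hcdef]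
      try push_cast
      try ring
    have hdiag : ∀ n ∈ Icc 1 k, c n n = ((n:ℝ))^(-(2*σ)) := by
      intro n hn
      simp only [Finset.mem_Icc] at hn
      have hn0 : (0:ℝ) < n := by exact_mod_cast hn.1
      simp only [hcdef]
      rw [div_self hn0.ne', Real.log_one, mul_zero, Real.cos_zero,
        show ((-1:ℝ))^(n+n) = 1 from Even.neg_one_pow ⟨n, by ring⟩]
      rw [show ((n:ℝ)) * n = (n:ℝ)^(2:ℕ) by ring, ← Real.rpow_natCast ((n:ℝ)) 2,
        ← Real.rpow_mul hn0.le]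
      norm_num
      try ring_nf
    rw [sq_expand_abstract k a c hre2 hsym, Finset.sum_congr rfl hdiag]
  set P : ℝ := ∑' n : ℕ, ((n:ℝ))^(-(2*σ)) with hP
  set η : ℂ := myEta s with hη
  set L : ℝ := ((‖η‖)^2 - P)/2 with hL
  refine ⟨L, ?_, ?_⟩
  · -- convergence of the double sum
    have hS : Tendsto (fun k : ℕ => ∑ n ∈ Icc 1 k, a n) atTop (𝓝 η) := partial_tendsto hs0
    have habs : Tendsto (fun k : ℕ => (‖∑ n ∈ Icc 1 k, a n‖)^2) atTop
        (𝓝 ((‖η‖)^2)) :=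
      ((continuous_norm.tendsto η).comp hS).pow 2
    have hdg := diag_tendsto h1
    have hfinal : Tendsto (fun k : ℕ =>
        ((‖∑ n ∈ Icc 1 k, a n‖)^2 - ∑ n ∈ Icc 1 k, ((n:ℝ))^(-(2*σ)))/2)
        atTop (𝓝 L) := by
      rw [hL]
      exact (habs.sub hdg).div_const 2
    apply hfinal.congr
    intro k
    have := hexp k
    simp only [hcdef] at this ⊢
    linarith [this]
  · -- the identity
    have hDne := one_sub_ne σ t h2
    have hden := denom_eq σ t
    set D : ℝ := 1 + 2 ^ (2 * (1 - σ)) - 2 ^ (2 - σ) * Real.cos (t * Real.log 2) with hD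
    have hDpos : 0 < D := by
      rw [← hden]
      have := norm_pos_iff.mpr hDne
      positivity
    have hetaeq : η = ((1:ℂ) - (2:ℂ)^((1:ℂ)-s)) * riemannZeta s := myEta_eq hs2 hs1
    have key : P + 2*L = D * (‖riemannZeta s‖)^2 := by
      have h1' : P + 2*L = (‖η‖)^2 := by rw [hL]; ring
      rw [h1', hetaeq, norm_mul, mul_pow, hsdef, hden]
    have hzeta2 : riemannZeta (2*(σ:ℂ)) = ((P:ℝ):ℂ) := zeta_two_sigma h1
    rw [hzeta2]
    rw [show ((P:ℝ):ℂ) + 2*((L:ℝ):ℂ) = ((P + 2*L : ℝ):ℂ) by push_cast; ring, key]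
    rw [show ((D * (‖riemannZeta s‖)^2 : ℝ):ℂ)
        = ((D:ℝ):ℂ) * (((‖riemannZeta s‖):ℂ))^2 by push_cast; ring]
    rw [show ((1/D : ℝ):ℂ) = 1/((D:ℝ):ℂ) by push_cast; ring]
    have hDC : ((D:ℝ):ℂ) ≠ 0 := by exact_mod_cast hDpos.ne'
    field_simp
end

section
/- Let t be a real number such that ζ(1/2 + it) = 0. Then the Euler–Mascheroni constant satisfies γ = lim_{k→∞} ( 2 Σ_{n=1}^{k} Σ_{m=n+1}^{k} (-1)^{m+n+1} (mn)^{-1/2} cos(t·log(m/n)) - log k ). -/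
open Complex Real Finset Filter Topology

noncomputable def etaP (s : ℂ) (j : ℕ) : ℂ :=
  ((2 * j + 1 : ℕ) : ℂ) ^ (-s) - ((2 * j + 2 : ℕ) : ℂ) ^ (-s)

noncomputable def etaF (s : ℂ) : ℂ := ∑' j, etaP s j

lemma etaP_bound {s : ℂ} (hs : 0 < s.re) (j : ℕ) :
    ‖etaP s j‖ ≤ ‖s‖ * ((2 * j + 1 : ℝ)) ^ (-s.re - 1) := by
  have hs0 : s ≠ 0 := fun h => by simp [h] at hs
  set a : ℝ := 2 * j + 1 with ha_def
  set b : ℝ := 2 * j + 2 with hb_def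
  have ha : (0 : ℝ) < a := by positivity
  have hab : a ≤ b := by simp [ha_def, hb_def]
  have hder : ∀ y ∈ Set.Icc a b, HasDerivWithinAt (fun y : ℝ => (y : ℂ) ^ (-s))
      ((fun y : ℝ => -s * (y : ℂ) ^ (-s - 1)) y) (Set.Icc a b) y := by
    intro y hy
    have hy0 : (0 : ℝ) < y := lt_of_lt_of_le ha hy.1
    have hr : (-s - 1 : ℂ) ≠ -1 := by
      intro hcon
      apply hs0
      have : (-s : ℂ) = 0 := by linear_combination hcon
      simpa [neg_eq_zero] using this
    have h1 := hasDerivAt_ofReal_cpow_const' hy0.ne' hr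
    have h1' : HasDerivAt (fun y : ℝ => (y : ℂ) ^ (-s) / (-s)) ((y : ℂ) ^ (-s - 1)) y := by
      simpa using h1
    have h2 := h1'.const_mul (-s)
    have heq : (fun y : ℝ => -s * ((y : ℂ) ^ (-s) / (-s))) = fun y : ℝ => (y : ℂ) ^ (-s) := by
      funext w
      rw [mul_div_cancel₀ _ (neg_ne_zero.mpr hs0)]
    rw [heq] at h2
    exact h2.hasDerivWithinAt
  have hbound : ∀ y ∈ Set.Icc a b,
      ‖(fun y : ℝ => -s * (y : ℂ) ^ (-s - 1)) y‖ ≤ ‖s‖ * a ^ (-s.re - 1) := by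
    intro y hy
    have hy0 : (0 : ℝ) < y := lt_of_lt_of_le ha hy.1
    simp only [norm_mul, norm_neg]
    have hre : (-s - 1).re = -s.re - 1 := by simp
    have h3 : ‖(y : ℂ) ^ (-s - 1)‖ = y ^ (-s.re - 1) := by
      rw [Complex.norm_cpow_eq_rpow_re_of_pos hy0, hre]
    rw [h3]
    exact mul_le_mul_of_nonneg_left
      (Real.rpow_le_rpow_of_nonpos ha hy.1 (by linarith)) (norm_nonneg s)
  have hmvt := Convex.norm_image_sub_le_of_norm_hasDerivWithin_le hder hbound
    (convex_Icc a b) (Set.left_mem_Icc.2 hab) (Set.right_mem_Icc.2 hab)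
  have hba : ‖b - a‖ = 1 := by simp [ha_def, hb_def]; norm_num
  rw [hba, mul_one] at hmvt
  have hcast : etaP s j = (a : ℂ) ^ (-s) - (b : ℂ) ^ (-s) := by
    simp only [etaP, ha_def, hb_def]
    push_cast
    ring_nf
  rw [hcast, ← norm_neg]
  simpa [neg_sub] using hmvt

lemma summable_twojone {c : ℝ} (hc : 1 < c) :
    Summable (fun j : ℕ => ((2 * j + 1 : ℝ)) ^ (-c)) := by
  have hbase : Summable (fun j : ℕ => (((j : ℝ) + 1)) ^ (-c)) := by
    have h := Real.summable_nat_rpow_inv.mpr hc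
    have h2 := (summable_nat_add_iff 1).mpr h
    refine h2.congr fun j => ?_
    rw [Real.rpow_neg (by positivity)]
    push_cast
    ring_nf
  refine Summable.of_nonneg_of_le (fun j => by positivity) (fun j => ?_) hbase
  refine Real.rpow_le_rpow_of_nonpos (by positivity) ?_ (by linarith)
  have : (0:ℝ) ≤ (j:ℝ) := Nat.cast_nonneg j
  linarith

lemma etaP_summable {s : ℂ} (hs : 0 < s.re) : Summable (etaP s) := by
  refine Summable.of_norm (Summable.of_nonneg_of_le (fun j => norm_nonneg _)
    (etaP_bound hs) ?_)
  exact (summable_twojone (by linarith : (1:ℝ) < s.re + 1)).mul_left ‖s‖ |>.congr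
    (fun j => by rw [show -(s.re + 1) = -s.re - 1 by ring])

lemma partial_even (s : ℂ) (k : ℕ) :
    ∑ n ∈ range (2 * k), (-1 : ℂ) ^ n * ((n + 1 : ℕ) : ℂ) ^ (-s)
      = ∑ j ∈ range k, etaP s j := by
  induction k with
  | zero => simp
  | succ k ih =>
    have h2 : 2 * (k + 1) = (2 * k + 1) + 1 := by ring
    rw [h2, Finset.sum_range_succ, Finset.sum_range_succ, ih, Finset.sum_range_succ,
      add_assoc]
    have he : (-1 : ℂ) ^ (2 * k) = 1 := by
      rw [pow_mul]; norm_num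
    have ho : (-1 : ℂ) ^ (2 * k + 1) = -1 := by
      rw [pow_succ, he]; ring
    congr 1
    simp only [he, ho, etaP, one_mul, neg_one_mul, sub_eq_add_neg]

lemma eta_tendsto {s : ℂ} (hs : 0 < s.re) :
    Tendsto (fun N : ℕ => ∑ n ∈ range N, (-1 : ℂ) ^ n * ((n + 1 : ℕ) : ℂ) ^ (-s))
      atTop (𝓝 (etaF s)) := by
  set P : ℕ → ℂ := fun N => ∑ n ∈ range N, (-1 : ℂ) ^ n * ((n + 1 : ℕ) : ℂ) ^ (-s) with hP
  have he : Tendsto (fun k : ℕ => P (2 * k)) atTop (𝓝 (etaF s)) := by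
    have := (etaP_summable hs).hasSum.tendsto_sum_nat
    refine this.congr fun k => ?_
    rw [hP]
    exact (partial_even s k).symm
  have hterm : Tendsto (fun N : ℕ => ‖(-1 : ℂ) ^ N * ((N + 1 : ℕ) : ℂ) ^ (-s)‖)
      atTop (𝓝 0) := by
    have h1 : ∀ N : ℕ, ‖(-1 : ℂ) ^ N * ((N + 1 : ℕ) : ℂ) ^ (-s)‖
        = ((N : ℝ) + 1) ^ (-s.re) := by
      intro N
      rw [norm_mul]
      have : ‖(-1 : ℂ) ^ N‖ = 1 := by simp
      rw [this, one_mul]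
      rw [show ((N + 1 : ℕ) : ℂ) = (((N : ℝ) + 1 : ℝ) : ℂ) by push_cast; ring]
      have hre : (-s).re = -s.re := by simp
      rw [Complex.norm_cpow_eq_rpow_re_of_pos (by positivity), hre]
    simp only [h1]
    have h2 : Tendsto (fun N : ℕ => ((N : ℝ) + 1)) atTop atTop :=
      tendsto_atTop_add_const_right _ 1 tendsto_natCast_atTop_atTop
    exact (tendsto_rpow_neg_atTop hs).comp h2
  have ho : Tendsto (fun k : ℕ => P (2 * k + 1)) atTop (𝓝 (etaF s)) := by
    have hsplit : ∀ k : ℕ, P (2 * k + 1) = P (2 * k) + (-1 : ℂ) ^ (2 * k) * ((2 * k + 1 : ℕ) : ℂ) ^ (-s) := by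
      intro k
      rw [hP]
      simp [Finset.sum_range_succ]
    have h2m : Tendsto (fun k : ℕ => 2 * k) atTop atTop :=
      tendsto_atTop_atTop_of_monotone (fun a b hab => by omega) (fun b => ⟨b, by omega⟩)
    have h2 : Tendsto (fun k : ℕ => (-1 : ℂ) ^ (2 * k) * ((2 * k + 1 : ℕ) : ℂ) ^ (-s))
        atTop (𝓝 0) := by
      apply tendsto_zero_iff_norm_tendsto_zero.mpr
      exact hterm.comp h2m
    have := he.add h2
    rw [add_zero] at this
    exact this.congr fun k => (hsplit k).symm
  rw [Metric.tendsto_atTop] at he ho ⊢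
  intro ε hε
  obtain ⟨K1, hK1⟩ := he ε hε
  obtain ⟨K2, hK2⟩ := ho ε hε
  refine ⟨2 * K1 + 2 * K2 + 2, fun N hN => ?_⟩
  rcases Nat.even_or_odd N with ⟨k, hk⟩ | ⟨k, hk⟩
  · have : N = 2 * k := by omega
    rw [this]
    exact hK1 k (by omega)
  · have : N = 2 * k + 1 := by omega
    rw [this]
    exact hK2 k (by omega)

-- summability of the basic series for re > 1
lemma summable_cpow {s : ℂ} (hs : 1 < s.re) :
    Summable (fun n : ℕ => ((n + 1 : ℕ) : ℂ) ^ (-s)) := by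
  refine Summable.of_norm ?_
  have hb : Summable (fun n : ℕ => (((n : ℝ) + 1)) ^ (-s.re)) := by
    have h := Real.summable_nat_rpow_inv.mpr hs
    have h2 := (summable_nat_add_iff 1).mpr h
    refine h2.congr fun j => ?_
    rw [Real.rpow_neg (by positivity)]
    push_cast
    ring_nf
  refine hb.congr fun n => ?_
  rw [show ((n + 1 : ℕ) : ℂ) = (((n : ℝ) + 1 : ℝ) : ℂ) by push_cast; ring,
    Complex.norm_cpow_eq_rpow_re_of_pos (by positivity)]
  simp

lemma etaF_eq_of_one_lt {s : ℂ} (hs : 1 < s.re) :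
    etaF s = (1 - (2 : ℂ) ^ (1 - s)) * riemannZeta s := by
  set f : ℕ → ℂ := fun n => ((n + 1 : ℕ) : ℂ) ^ (-s) with hf
  have hsum : Summable f := summable_cpow hs
  have he : Summable (fun k : ℕ => f (2 * k)) :=
    hsum.comp_injective (fun a b hab => by omega)
  have ho : Summable (fun k : ℕ => f (2 * k + 1)) :=
    hsum.comp_injective (fun a b hab => by omega)
  have hzeta : riemannZeta s = ∑' n, f n := by
    rw [zeta_eq_tsum_one_div_nat_add_one_cpow hs]
    refine tsum_congr fun n => ?_
    simp only [hf]
    rw [Complex.cpow_neg]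
    push_cast
    rw [one_div]
  have hodd : ∑' k, f (2 * k + 1) = (2 : ℂ) ^ (-s) * riemannZeta s := by
    have h1 : ∀ k : ℕ, f (2 * k + 1) = (2 : ℂ) ^ (-s) * f k := by
      intro k
      rw [hf]
      simp only
      rw [show (2 * k + 1 + 1 : ℕ) = 2 * (k + 1) by ring]
      rw [show ((2 * (k + 1) : ℕ) : ℂ) = ((2 : ℝ) : ℂ) * (((k + 1 : ℕ) : ℝ) : ℂ) by push_cast; ring]
      rw [Complex.mul_cpow_ofReal_nonneg (by norm_num) (by positivity)]
      norm_num
    rw [tsum_congr h1, tsum_mul_left, ← hzeta]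
  have htot : ∑' k, f (2 * k) + ∑' k, f (2 * k + 1) = ∑' n, f n :=
    tsum_even_add_odd he ho
  have heta : etaF s = ∑' k, f (2 * k) - ∑' k, f (2 * k + 1) := by
    rw [etaF, ← Summable.tsum_sub he ho]
    exact tsum_congr fun j => rfl
  rw [heta]
  have heven : ∑' k, f (2 * k) = riemannZeta s - (2 : ℂ) ^ (-s) * riemannZeta s := by
    rw [eq_sub_iff_add_eq, ← hodd, htot, hzeta]
  rw [heven, hodd]
  have h2 : (2 : ℂ) ^ (1 - s) = 2 * (2 : ℂ) ^ (-s) := by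
    rw [sub_eq_add_neg, Complex.cpow_add _ _ (by norm_num : (2:ℂ) ≠ 0), Complex.cpow_one]
  rw [h2]
  ring

lemma etaF_differentiableAt {z : ℂ} (hz : 0 < z.re) : DifferentiableAt ℂ etaF z := by
  set δ : ℝ := z.re / 2 with hδ
  have hδ0 : 0 < δ := by positivity
  set R : ℝ := ‖z‖ + δ with hR
  set U : Set ℂ := Metric.ball z δ with hU
  have hUopen : IsOpen U := Metric.isOpen_ball
  have hmem : ∀ s ∈ U, δ < s.re ∧ ‖s‖ ≤ R := by
    intro s hsU
    have hdist : ‖s - z‖ < δ := by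
      have h0 := Metric.mem_ball.mp hsU
      rwa [dist_eq_norm] at h0
    constructor
    · have h1 : |s.re - z.re| ≤ ‖s - z‖ := by
        have := Complex.abs_re_le_norm (s - z)
        simpa [Complex.sub_re] using this
      have h2 : |s.re - z.re| < δ := lt_of_le_of_lt h1 hdist
      have := abs_lt.mp h2
      rw [hδ] at *
      linarith [this.1]
    · calc ‖s‖ = ‖z + (s - z)‖ := by ring_nf
      _ ≤ ‖z‖ + ‖s - z‖ := norm_add_le _ _
      _ ≤ ‖z‖ + δ := by linarith
  have hdiff : DifferentiableOn ℂ (fun w : ℂ => ∑' j, etaP w j) U := by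
    refine differentiableOn_tsum_of_summable_norm
      (u := fun j => R * ((2 * j + 1 : ℝ)) ^ (-δ - 1)) ?_ ?_ hUopen ?_
    · exact ((summable_twojone (by linarith : (1:ℝ) < δ + 1)).congr
        (fun j => by rw [show -(δ + 1) = -δ - 1 by ring])).mul_left R
    · intro j
      have hd : ∀ n : ℕ, n ≠ 0 → Differentiable ℂ (fun s : ℂ => ((n : ℕ) : ℂ) ^ (-s)) := by
        intro n hn
        exact Differentiable.const_cpow differentiable_id.neg
          (Or.inl (by exact_mod_cast hn))
      exact (((hd (2 * j + 1) (by omega)).sub (hd (2 * j + 2) (by omega))).differentiableOn)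
    · intro j w hw
      obtain ⟨h1, h2⟩ := hmem w hw
      have hw0 : 0 < w.re := lt_trans hδ0 h1
      calc ‖etaP w j‖ ≤ ‖w‖ * ((2 * j + 1 : ℝ)) ^ (-w.re - 1) := etaP_bound hw0 j
        _ ≤ R * ((2 * j + 1 : ℝ)) ^ (-δ - 1) := by
            apply mul_le_mul h2 ?_ (by positivity) (by positivity)
            apply Real.rpow_le_rpow_of_exponent_le (by push_cast; linarith [Nat.cast_nonneg (α := ℝ) j])
            linarith
  have : DifferentiableOn ℂ etaF U := hdiff.congr fun s _ => rfl
  exact (this z (Metric.mem_ball_self hδ0)).differentiableAt (hUopen.mem_nhds (Metric.mem_ball_self hδ0))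

lemma etaF_zero (t : ℝ) (h : riemannZeta (1 / 2 + t * Complex.I) = 0) :
    etaF (1 / 2 + t * Complex.I) = 0 := by
  set s₀ : ℂ := 1 / 2 + t * Complex.I with hs₀
  have hs₀re : s₀.re = 1 / 2 := by simp [hs₀]
  set A : Set ℂ := {s : ℂ | 0 < s.re ∧ s.re < 1} with hA
  set B : Set ℂ := {s : ℂ | 0 < s.re ∧ 0 < s.im} with hB
  set C : Set ℂ := {s : ℂ | 1 < s.re} with hC
  set U : Set ℂ := (A ∪ B) ∪ C with hUdef
  have hAopen : IsOpen A := by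
    rw [hA, show {s : ℂ | 0 < s.re ∧ s.re < 1}
        = {s : ℂ | 0 < s.re} ∩ {s : ℂ | s.re < 1} from rfl]
    exact (isOpen_lt continuous_const Complex.continuous_re).inter
      (isOpen_lt Complex.continuous_re continuous_const)
  have hBopen : IsOpen B := by
    rw [hB, show {s : ℂ | 0 < s.re ∧ 0 < s.im}
        = {s : ℂ | 0 < s.re} ∩ {s : ℂ | 0 < s.im} from rfl]
    exact (isOpen_lt continuous_const Complex.continuous_re).inter
      (isOpen_lt continuous_const Complex.continuous_im)
  have hCopen : IsOpen C := isOpen_lt continuous_const Complex.continuous_re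
  have hUopen : IsOpen U := ((hAopen.union hBopen).union hCopen)
  have hApre : IsPreconnected A := by
    have hco : Convex ℝ A := by
      rw [hA, show {s : ℂ | 0 < s.re ∧ s.re < 1}
          = {s : ℂ | 0 < s.re} ∩ {s : ℂ | s.re < 1} from rfl]
      exact (convex_halfSpace_re_gt (0:ℝ)).inter (convex_halfSpace_re_lt (1:ℝ))
    exact hco.isPreconnected
  have hBpre : IsPreconnected B := by
    have hco : Convex ℝ B := by
      rw [hB, show {s : ℂ | 0 < s.re ∧ 0 < s.im}
          = {s : ℂ | 0 < s.re} ∩ {s : ℂ | 0 < s.im} from rfl]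
      exact (convex_halfSpace_re_gt (0:ℝ)).inter (convex_halfSpace_im_gt (0:ℝ))
    exact hco.isPreconnected
  have hCpre : IsPreconnected C := (convex_halfSpace_re_gt (1:ℝ)).isPreconnected
  have hABpre : IsPreconnected (A ∪ B) := by
    refine IsPreconnected.union (⟨1/2, 1/2⟩ : ℂ) ?_ ?_ hApre hBpre
    · show _ ∈ A
      rw [hA]
      refine ⟨?_, ?_⟩ <;> norm_num
    · show _ ∈ B
      rw [hB]
      refine ⟨?_, ?_⟩ <;> norm_num
  have hUpre : IsPreconnected U := by
    refine IsPreconnected.union (⟨2, 1⟩ : ℂ) ?_ ?_ hABpre hCpre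
    · right
      show _ ∈ B
      rw [hB]
      refine ⟨?_, ?_⟩ <;> norm_num
    · show _ ∈ C
      rw [hC]
      norm_num
  have hUsub : ∀ s ∈ U, 0 < s.re ∧ s ≠ 1 := by
    rintro s (( ⟨h1, h2⟩ | ⟨h1, h2⟩) | h1)
    · exact ⟨h1, fun hcon => by rw [hcon] at h2; simp at h2⟩
    · exact ⟨h1, fun hcon => by rw [hcon] at h2; simp at h2⟩
    · have h1' : 1 < s.re := h1
      exact ⟨by linarith, fun hcon => by rw [hcon] at h1'; simp at h1'⟩
  have hg : AnalyticOnNhd ℂ etaF U := by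
    apply DifferentiableOn.analyticOnNhd ?_ hUopen
    exact fun s hsU => (etaF_differentiableAt (hUsub s hsU).1).differentiableWithinAt
  have hG : AnalyticOnNhd ℂ (fun s => (1 - (2:ℂ) ^ ((1:ℂ) - s)) * riemannZeta s) U := by
    apply DifferentiableOn.analyticOnNhd ?_ hUopen
    intro s hsU
    apply DifferentiableWithinAt.mul
    · apply DifferentiableAt.differentiableWithinAt
      apply DifferentiableAt.sub (differentiableAt_const _)
      apply DifferentiableAt.const_cpow ((differentiableAt_const _).sub differentiableAt_id)
        (Or.inl (by norm_num))
    · exact (differentiableAt_riemannZeta (hUsub s hsU).2).differentiableWithinAt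
  have h2mem : (2 : ℂ) ∈ U := by
    right
    show _ ∈ C
    rw [hC]
    simp only [Set.mem_setOf_eq]
    norm_num
  have hev : etaF =ᶠ[𝓝 (2 : ℂ)] (fun s => (1 - (2:ℂ) ^ ((1:ℂ) - s)) * riemannZeta s) := by
    have hCnhds : C ∈ 𝓝 (2 : ℂ) := hCopen.mem_nhds (by simp [hC])
    filter_upwards [hCnhds] with s hsC
    exact etaF_eq_of_one_lt hsC
  have heq := hg.eqOn_of_preconnected_of_eventuallyEq hG hUpre h2mem hev
  have hs₀U : s₀ ∈ U := by
    left; left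
    show _ ∈ A
    rw [hA]
    refine ⟨?_, ?_⟩ <;> rw [hs₀re] <;> norm_num
  have := heq hs₀U
  rw [this]
  simp [h]


lemma aux_re (p q : ℝ) (z w : ℂ) :
    (((p : ℂ) * z) * (starRingEnd ℂ) ((q : ℂ) * w)).re
      = p * q * (z.re * w.re + z.im * w.im) := by
  simp [Complex.mul_re, Complex.mul_im, Complex.conj_re, Complex.conj_im]
  ring

-- cross term computation
lemma cross_re (t : ℝ) {n m : ℕ} (hn : 1 ≤ n) (hm : 1 ≤ m) :
    (((-1 : ℂ) ^ (n + 1) * (n : ℂ) ^ (-(1 / 2 + t * Complex.I))) *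
      (starRingEnd ℂ) ((-1 : ℂ) ^ (m + 1) * (m : ℂ) ^ (-(1 / 2 + t * Complex.I)))).re
    = (-1 : ℝ) ^ (m + n) * ((m * n : ℝ)) ^ (-(1 / 2 : ℝ))
        * Real.cos (t * Real.log ((m : ℝ) / n)) := by
  set s₀ : ℂ := 1 / 2 + t * Complex.I with hs₀
  have hn0 : (0 : ℝ) < n := by exact_mod_cast hn
  have hm0 : (0 : ℝ) < m := by exact_mod_cast hm
  set L : ℝ := Real.log n with hL
  set M : ℝ := Real.log m with hM
  have hcpow : ∀ k : ℕ, 0 < k → (k : ℂ) ^ (-s₀)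
      = Complex.exp ((Real.log k : ℂ) * (-s₀)) := by
    intro k hk
    have hk0 : (k : ℂ) ≠ 0 := Nat.cast_ne_zero.mpr (by omega)
    rw [Complex.cpow_def_of_ne_zero hk0]
    congr 1
    rw [show (k : ℂ) = ((k : ℝ) : ℂ) by push_cast; ring]
    rw [Complex.ofReal_log (by positivity)]
  have hre : ∀ x : ℝ, (Complex.exp ((x : ℂ) * (-s₀))).re
      = Real.exp (-x / 2) * Real.cos (t * x) := by
    intro x
    rw [Complex.exp_re]
    have h1 : ((x : ℂ) * (-s₀)).re = -x / 2 := by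
      simp [hs₀]
      ring
    have h2 : ((x : ℂ) * (-s₀)).im = -(t * x) := by
      simp [hs₀]
      ring
    rw [h1, h2, Real.cos_neg]
  have him : ∀ x : ℝ, (Complex.exp ((x : ℂ) * (-s₀))).im
      = -(Real.exp (-x / 2) * Real.sin (t * x)) := by
    intro x
    rw [Complex.exp_im]
    have h1 : ((x : ℂ) * (-s₀)).re = -x / 2 := by
      simp [hs₀]
      ring
    have h2 : ((x : ℂ) * (-s₀)).im = -(t * x) := by
      simp [hs₀]
      ring
    rw [h1, h2, Real.sin_neg]
    ring
  -- express signs as real casts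
  have hsign : ∀ k : ℕ, ((-1 : ℂ) ^ (k + 1)) = (((-1 : ℝ) ^ (k + 1) : ℝ) : ℂ) := by
    intro k
    push_cast
    ring
  rw [hsign n, hsign m, hcpow n (by omega), hcpow m (by omega), aux_re]
  rw [hre L, hre M, him L, him M]
  have hprod : Real.exp (-L / 2) * Real.cos (t * L) * (Real.exp (-M / 2) * Real.cos (t * M))
      + -(Real.exp (-L / 2) * Real.sin (t * L)) * -(Real.exp (-M / 2) * Real.sin (t * M))
      = Real.exp (-(L + M) / 2) * Real.cos (t * (L - M)) := by
    rw [show t * (L - M) = t * L - t * M by ring, Real.cos_sub,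
      show -(L + M) / 2 = (-L / 2) + (-M / 2) by ring, Real.exp_add]
    ring
  rw [hprod]
  have hpow : ((m * n : ℝ)) ^ (-(1 / 2 : ℝ)) = Real.exp (-(L + M) / 2) := by
    rw [Real.rpow_def_of_pos (by positivity)]
    rw [Real.log_mul (by positivity) (by positivity), hL, hM]
    congr 1
    ring
  have hcos : Real.cos (t * (L - M)) = Real.cos (t * Real.log ((m : ℝ) / n)) := by
    rw [Real.log_div (by positivity) (by positivity), ← hL, ← hM]
    rw [show t * (M - L) = -(t * (L - M)) by ring, Real.cos_neg]
  rw [hpow, hcos]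
  have hsgn2 : (-1 : ℝ) ^ (n + 1) * (-1 : ℝ) ^ (m + 1) = (-1 : ℝ) ^ (m + n) := by
    rw [← pow_add]
    rw [show n + 1 + (m + 1) = (m + n) + 2 by ring, pow_add]
    norm_num
  rw [hsgn2]
  ring

lemma sum_Icc_one (f : ℕ → ℂ) (k : ℕ) :
    ∑ n ∈ Icc 1 k, f n = ∑ i ∈ range k, f (i + 1) := by
  induction k with
  | zero => simp
  | succ k ih => rw [Finset.sum_Icc_succ_top (by omega), ih, Finset.sum_range_succ]

lemma normSq_expand (t : ℝ) (k : ℕ) :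
    Complex.normSq (∑ n ∈ Icc 1 k, (-1 : ℂ) ^ (n + 1) * (n : ℂ) ^ (-(1 / 2 + t * Complex.I))) =
      (∑ n ∈ Icc 1 k, ((n : ℝ))⁻¹)
        + 2 * ∑ n ∈ Icc 1 k, ∑ m ∈ Icc (n + 1) k,
            (-1 : ℝ) ^ (m + n) * ((m * n : ℝ)) ^ (-(1 / 2 : ℝ))
              * Real.cos (t * Real.log ((m : ℝ) / n)) := by
  set a : ℕ → ℂ := fun n => (-1 : ℂ) ^ (n + 1) * (n : ℂ) ^ (-(1 / 2 + t * Complex.I)) with ha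
  set c : ℕ → ℕ → ℝ := fun n m => (-1 : ℝ) ^ (m + n) * ((m * n : ℝ)) ^ (-(1 / 2 : ℝ))
              * Real.cos (t * Real.log ((m : ℝ) / n)) with hc
  have hdiag : ∀ n : ℕ, 1 ≤ n → Complex.normSq (a n) = ((n : ℝ))⁻¹ := by
    intro n hn
    have h1 : Complex.normSq (a n) = (a n * (starRingEnd ℂ) (a n)).re := by
      rw [Complex.mul_conj]
      simp
    rw [h1, ha]
    rw [cross_re t hn hn]
    have hn0 : (0 : ℝ) < n := by exact_mod_cast hn
    rw [show (n + n) = 2 * n by ring, pow_mul]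
    norm_num
    rw [show ((n : ℝ) * n) = (n : ℝ) ^ (2 : ℕ) by ring, ← Real.rpow_natCast ((n:ℝ)) 2,
      ← Real.rpow_mul (le_of_lt hn0)]
    norm_num
    rw [Real.rpow_neg_one]
  induction k with
  | zero => simp
  | succ k ih =>
    have hk1 : (1 : ℕ) ≤ k + 1 := by omega
    rw [Finset.sum_Icc_succ_top hk1, Finset.sum_Icc_succ_top hk1, Finset.sum_Icc_succ_top hk1]
    rw [Complex.normSq_add, ih, hdiag (k+1) (by omega)]
    have hempty : ∑ m ∈ Icc (k + 1 + 1) (k + 1), c (k+1) m = 0 := by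
      rw [Finset.Icc_eq_empty (by omega)]
      simp
    have hinner : ∀ n ∈ Icc 1 k, ∑ m ∈ Icc (n + 1) (k + 1), c n m
        = (∑ m ∈ Icc (n + 1) k, c n m) + c n (k + 1) := by
      intro n hn
      have hnk : n ≤ k := (Finset.mem_Icc.mp hn).2
      exact Finset.sum_Icc_succ_top (by omega) _
    rw [Finset.sum_congr rfl hinner, Finset.sum_add_distrib, hempty]
    have hcross : ((∑ n ∈ Icc 1 k, a n) * (starRingEnd ℂ) (a (k + 1))).re
        = ∑ n ∈ Icc 1 k, c n (k + 1) := by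
      rw [Finset.sum_mul, Complex.re_sum]
      refine Finset.sum_congr rfl fun n hn => ?_
      have hn1 : 1 ≤ n := (Finset.mem_Icc.mp hn).1
      rw [ha, hc]
      exact cross_re t hn1 (by omega)
    rw [hcross]
    ring

lemma sum_Icc_one_real (f : ℕ → ℝ) (k : ℕ) :
    ∑ n ∈ Icc 1 k, f n = ∑ i ∈ range k, f (i + 1) := by
  induction k with
  | zero => simp
  | succ k ih => rw [Finset.sum_Icc_succ_top (by omega), ih, Finset.sum_range_succ]

lemma harmonic_tendsto_gamma :
    Tendsto (fun k : ℕ => (∑ n ∈ Icc 1 k, ((n : ℝ))⁻¹) - Real.log k) atTop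
      (𝓝 Real.eulerMascheroniConstant) := by
  have hlog : Tendsto (fun k : ℕ => Real.log ((k + 1 : ℝ) / k)) atTop (𝓝 0) := by
    have h1 : Tendsto (fun k : ℕ => (k + 1 : ℝ) / k) atTop (𝓝 1) := by
      have h2 : Tendsto (fun k : ℕ => 1 + 1 / (k : ℝ)) atTop (𝓝 (1 + 0)) :=
        tendsto_const_nhds.add tendsto_one_div_atTop_nhds_zero_nat
      rw [add_zero] at h2
      apply h2.congr'
      filter_upwards [eventually_gt_atTop 0] with k hk
      have hk0 : (k : ℝ) ≠ 0 := by positivity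
      field_simp
    have h3 : ContinuousAt Real.log 1 := Real.continuousAt_log (by norm_num)
    have := h3.tendsto.comp h1
    rwa [Real.log_one] at this
  have hmain := Real.tendsto_eulerMascheroniSeq.add hlog
  rw [add_zero] at hmain
  apply hmain.congr'
  filter_upwards [eventually_gt_atTop 0] with k hk
  have hk0 : (k : ℝ) ≠ 0 := by positivity
  have hH : (harmonic k : ℝ) = ∑ n ∈ Icc 1 k, ((n : ℝ))⁻¹ := by
    rw [harmonic]
    push_cast
    rw [sum_Icc_one_real (fun n => ((n : ℝ))⁻¹) k]
    push_cast
    rfl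
  rw [Real.eulerMascheroniSeq, hH, Real.log_div (by positivity) hk0]
  push_cast
  ring

theorem stmt_9 (t : ℝ) (h : riemannZeta (1 / 2 + t * Complex.I) = 0) :
    Tendsto (fun k : ℕ =>
        2 * ∑ n ∈ Finset.Icc 1 k, ∑ m ∈ Finset.Icc (n + 1) k,
            (-1 : ℝ) ^ (m + n + 1) * ((m * n : ℝ)) ^ (-(1 / 2 : ℝ))
              * Real.cos (t * Real.log ((m : ℝ) / n))
          - Real.log k)
      atTop (𝓝 Real.eulerMascheroniConstant) := by
  -- the partial sums of the eta series at s₀ tend to 0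
  have hS : Tendsto (fun k : ℕ =>
      ∑ n ∈ Icc 1 k, (-1 : ℂ) ^ (n + 1) * (n : ℂ) ^ (-(1 / 2 + t * Complex.I)))
      atTop (𝓝 0) := by
    have hre : (0 : ℝ) < (1 / 2 + t * Complex.I : ℂ).re := by
      simp
    have h1 := eta_tendsto hre
    rw [etaF_zero t h] at h1
    apply h1.congr fun k => ?_
    rw [sum_Icc_one]
    refine Finset.sum_congr rfl fun i _ => ?_
    rw [show i + 1 + 1 = i + 2 by ring, pow_add]
    norm_num
  have hnormSq : Tendsto (fun k : ℕ => Complex.normSq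
      (∑ n ∈ Icc 1 k, (-1 : ℂ) ^ (n + 1) * (n : ℂ) ^ (-(1 / 2 + t * Complex.I))))
      atTop (𝓝 0) := by
    have hcont : Continuous Complex.normSq := Complex.continuous_normSq
    have := (hcont.tendsto 0).comp hS
    simpa [Function.comp_def] using this
  have hmain := harmonic_tendsto_gamma.sub hnormSq
  rw [sub_zero] at hmain
  apply hmain.congr fun k => ?_
  have hexp := normSq_expand t k
  have hsign : ∀ n m : ℕ,
      (-1 : ℝ) ^ (m + n + 1) * ((m * n : ℝ)) ^ (-(1 / 2 : ℝ))
        * Real.cos (t * Real.log ((m : ℝ) / n))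
      = -((-1 : ℝ) ^ (m + n) * ((m * n : ℝ)) ^ (-(1 / 2 : ℝ))
        * Real.cos (t * Real.log ((m : ℝ) / n))) := by
    intro n m
    rw [pow_add]
    ring
  have hneg : ∑ n ∈ Icc 1 k, ∑ m ∈ Icc (n + 1) k,
      (-1 : ℝ) ^ (m + n + 1) * ((m * n : ℝ)) ^ (-(1 / 2 : ℝ))
        * Real.cos (t * Real.log ((m : ℝ) / n))
      = -∑ n ∈ Icc 1 k, ∑ m ∈ Icc (n + 1) k,
      (-1 : ℝ) ^ (m + n) * ((m * n : ℝ)) ^ (-(1 / 2 : ℝ))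
        * Real.cos (t * Real.log ((m : ℝ) / n)) := by
    rw [← Finset.sum_neg_distrib]
    refine Finset.sum_congr rfl fun n _ => ?_
    rw [← Finset.sum_neg_distrib]
    exact Finset.sum_congr rfl fun m _ => hsign n m
  rw [hneg]
  linarith [hexp]
end

section
/- Let s be a complex number with Re(s) > 0 and s ≠ 1. Then ζ(s) = lim_{k→∞} ( Σ_{n=1}^{k-1} n^{-s} - k^{1-s}/(1-s) ). -/
open Complex Finset Filter Topology Set MeasureTheory intervalIntegral

noncomputable def zterm (n : ℕ) (s : ℂ) : ℂ :=
  (n : ℂ) ^ (-s) - (((n : ℂ) + 1) ^ (1 - s) - (n : ℂ) ^ (1 - s)) / (1 - s)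

lemma zterm_eq_integral {n : ℕ} (hn : 1 ≤ n) {s : ℂ} (hs : s ≠ 1) :
    zterm n s = ∫ x in (n : ℝ)..(n + 1 : ℝ), ((n : ℂ) ^ (-s) - (x : ℂ) ^ (-s)) := by
  have hn0 : (0:ℝ) < n := by exact_mod_cast hn
  have h0 : (0:ℝ) ∉ Set.uIcc (n:ℝ) ((n:ℝ)+1) := by
    rw [Set.uIcc_of_le (by linarith)]
    rintro ⟨h, -⟩; linarith
  have hr : (-s) ≠ -1 := by simpa using (fun h => hs (neg_injective h))
  rw [intervalIntegral.integral_sub intervalIntegrable_const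
      (intervalIntegrable_cpow (Or.inr h0)),
    intervalIntegral.integral_const, integral_cpow (Or.inr ⟨hr, h0⟩)]
  have : (-s) + 1 = 1 - s := by ring
  rw [this]
  push_cast
  rw [add_sub_cancel_left]
  simp [zterm]

lemma inner_bound {n : ℕ} (hn : 1 ≤ n) {s : ℂ} (h1 : 0 < s.re) (x : ℝ)
    (hx1 : (n:ℝ) ≤ x) (hx2 : x ≤ (n:ℝ) + 1) :
    ‖(n : ℂ) ^ (-s) - (x : ℂ) ^ (-s)‖ ≤ ‖s‖ * (n:ℝ) ^ (-1 - s.re) := by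
  have hn0 : (0:ℝ) < n := by exact_mod_cast hn
  have hs0 : s ≠ 0 := fun h => by simp [h] at h1
  have h0 : (0:ℝ) ∉ Set.uIcc (n:ℝ) x := by
    rw [Set.uIcc_of_le hx1]; rintro ⟨h, -⟩; linarith
  have hr : (-s - 1) ≠ -1 := by
    intro h; apply hs0; linear_combination -h
  have key : (n : ℂ) ^ (-s) - (x : ℂ) ^ (-s)
      = s * ∫ t in (n:ℝ)..x, (t : ℂ) ^ (-s - 1) := by
    rw [integral_cpow (Or.inr ⟨hr, h0⟩)]
    have : (-s - 1) + 1 = -s := by ring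
    rw [this]
    push_cast
    rw [div_neg, mul_neg, mul_div_assoc', mul_comm, mul_div_assoc, div_self hs0]
    ring
  rw [key, norm_mul]
  have hb : ∀ t ∈ Set.uIoc (n:ℝ) x, ‖(t : ℂ) ^ (-s - 1)‖ ≤ (n:ℝ) ^ (-1 - s.re) := by
    intro t ht
    rw [Set.uIoc_of_le hx1] at ht
    have ht0 : 0 < t := lt_of_lt_of_le hn0 ht.1.le
    rw [Complex.norm_cpow_eq_rpow_re_of_pos ht0]
    have : (-s - 1).re = -1 - s.re := by simp; ring
    rw [this]
    exact Real.rpow_le_rpow_of_nonpos hn0 ht.1.le (by linarith)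
  have := intervalIntegral.norm_integral_le_of_norm_le_const hb
  calc ‖s‖ * ‖∫ t in (n:ℝ)..x, (t : ℂ) ^ (-s - 1)‖
      ≤ ‖s‖ * ((n:ℝ) ^ (-1 - s.re) * |x - (n:ℝ)|) := by
        exact mul_le_mul_of_nonneg_left this (norm_nonneg s)
    _ ≤ ‖s‖ * ((n:ℝ) ^ (-1 - s.re) * 1) := by
        have h01 : |x - (n:ℝ)| ≤ 1 := by
          rw [_root_.abs_of_nonneg (by linarith : (0:ℝ) ≤ x - n)]; linarith
        have hP : (0:ℝ) ≤ (n:ℝ) ^ (-1 - s.re) := by positivity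
        exact mul_le_mul_of_nonneg_left
          (mul_le_mul_of_nonneg_left h01 hP) (norm_nonneg s)
    _ = ‖s‖ * (n:ℝ) ^ (-1 - s.re) := by ring

lemma zterm_bound {n : ℕ} (hn : 1 ≤ n) {s : ℂ} (h1 : 0 < s.re) (hs : s ≠ 1) :
    ‖zterm n s‖ ≤ ‖s‖ * (n:ℝ) ^ (-1 - s.re) := by
  rw [zterm_eq_integral hn hs]
  have hb : ∀ x ∈ Set.uIoc (n:ℝ) ((n:ℝ)+1), ‖(n : ℂ) ^ (-s) - (x : ℂ) ^ (-s)‖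
      ≤ ‖s‖ * (n:ℝ) ^ (-1 - s.re) := by
    intro x hx
    rw [Set.uIoc_of_le (by linarith)] at hx
    exact inner_bound hn h1 x hx.1.le hx.2
  have := intervalIntegral.norm_integral_le_of_norm_le_const hb
  simpa using this

lemma zterm_summable {s : ℂ} (h1 : 0 < s.re) (hs : s ≠ 1) :
    Summable (fun n : ℕ => zterm (n + 1) s) := by
  apply Summable.of_norm_bounded (g := fun n : ℕ => ‖s‖ * (((n:ℝ) + 1) ^ (-1 - s.re)))
  · apply Summable.mul_left
    have h : Summable (fun n : ℕ => ((n:ℝ)) ^ (-1 - s.re)) :=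
      Real.summable_nat_rpow.2 (by linarith)
    have := (summable_nat_add_iff 1).2 h
    simpa using this
  · intro n
    have := zterm_bound (Nat.le_add_left 1 n) h1 hs
    simpa using this

lemma zterm_diffOn (n : ℕ) {V : Set ℂ} (hV : ∀ z ∈ V, z ≠ 1) :
    DifferentiableOn ℂ (fun z => zterm (n + 1) z) V := by
  have hc : ((n + 1 : ℕ) : ℂ) ≠ 0 := by exact_mod_cast Nat.succ_ne_zero n
  have hc' : ((n + 1 : ℕ) : ℂ) + 1 ≠ 0 := by
    have h2 : ((n + 1 : ℕ) : ℂ) + 1 = ((n + 2 : ℕ) : ℂ) := by push_cast; ring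
    rw [h2]
    exact_mod_cast Nat.succ_ne_zero (n + 1)
  have d1 : Differentiable ℂ (fun z : ℂ => ((n + 1 : ℕ) : ℂ) ^ (-z)) :=
    differentiable_neg.const_cpow (Or.inl hc)
  have d2 : Differentiable ℂ (fun z : ℂ => (((n + 1 : ℕ) : ℂ) + 1) ^ (1 - z)) :=
    ((differentiable_const 1).sub differentiable_id).const_cpow (Or.inl hc')
  have d3 : Differentiable ℂ (fun z : ℂ => ((n + 1 : ℕ) : ℂ) ^ (1 - z)) :=
    ((differentiable_const 1).sub differentiable_id).const_cpow (Or.inl hc)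
  apply DifferentiableOn.sub d1.differentiableOn
  apply DifferentiableOn.div ((d2.sub d3).differentiableOn)
    (((differentiable_const 1).sub differentiable_id).differentiableOn)
  intro z hz
  exact sub_ne_zero_of_ne (fun h => hV z hz h.symm)

lemma T_diffAt {s₀ : ℂ} (h1 : 0 < s₀.re) (hs : s₀ ≠ 1) :
    DifferentiableAt ℂ (fun z => ∑' n : ℕ, zterm (n + 1) z) s₀ := by
  set ε : ℝ := s₀.re / 2 with hε
  have hε0 : 0 < ε := by positivity
  have hd1 : 0 < ‖s₀ - 1‖ := by
    rw [norm_pos_iff]; exact sub_ne_zero_of_ne hs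
  set r : ℝ := min ε ‖s₀ - 1‖ with hr
  have hr0 : 0 < r := lt_min hε0 hd1
  have hball : ∀ z ∈ Metric.ball s₀ r, z ≠ 1 ∧ ε ≤ z.re ∧ ‖z‖ ≤ ‖s₀‖ + ε := by
    intro z hz
    rw [Metric.mem_ball, dist_eq_norm] at hz
    refine ⟨?_, ?_, ?_⟩
    · intro h
      rw [h] at hz
      have : ‖s₀ - 1‖ < r := by rwa [norm_sub_rev] at hz
      exact absurd this (not_lt.2 (min_le_right _ _))
    · have h2 : |(z - s₀).re| ≤ ‖z - s₀‖ := Complex.abs_re_le_norm _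
      have h3 : ‖z - s₀‖ < ε := lt_of_lt_of_le hz (min_le_left _ _)
      have := abs_le.1 h2
      have : -(ε) ≤ (z - s₀).re := by linarith [this.1]
      simp only [Complex.sub_re] at this
      have : s₀.re - ε ≤ z.re := by linarith
      rw [hε] at this ⊢; linarith
    · have h3 : ‖z - s₀‖ < ε := lt_of_lt_of_le hz (min_le_left _ _)
      calc ‖z‖ = ‖s₀ + (z - s₀)‖ := by ring_nf
        _ ≤ ‖s₀‖ + ‖z - s₀‖ := norm_add_le _ _
        _ ≤ ‖s₀‖ + ε := by linarith
  have hu : Summable (fun n : ℕ => (‖s₀‖ + ε) * (((n:ℝ) + 1) ^ (-1 - ε))) := by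
    apply Summable.mul_left
    have h : Summable (fun n : ℕ => ((n:ℝ)) ^ (-1 - ε)) :=
      Real.summable_nat_rpow.2 (by linarith)
    have := (summable_nat_add_iff 1).2 h
    simpa using this
  have hdiff : DifferentiableOn ℂ (fun z => ∑' n : ℕ, zterm (n + 1) z)
      (Metric.ball s₀ r) := by
    apply differentiableOn_tsum_of_summable_norm hu
      (fun n => zterm_diffOn n (fun z hz => (hball z hz).1)) Metric.isOpen_ball
    intro n z hz
    obtain ⟨hz1, hz2, hz3⟩ := hball z hz
    have hb := zterm_bound (Nat.le_add_left 1 n) (lt_of_lt_of_le hε0 hz2) hz1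
    refine le_trans hb ?_
    have hscale : ((n + 1 : ℕ) : ℝ) ^ (-1 - z.re) ≤ ((n:ℝ) + 1) ^ (-1 - ε) := by
      push_cast
      exact Real.rpow_le_rpow_of_exponent_le (by linarith [Nat.cast_nonneg (α := ℝ) n])
        (by linarith)
    have h0 : (0:ℝ) ≤ ((n + 1 : ℕ) : ℝ) ^ (-1 - z.re) := by positivity
    exact mul_le_mul hz3 hscale h0 (by positivity)
  exact hdiff.differentiableAt (Metric.isOpen_ball.mem_nhds (Metric.mem_ball_self hr0))

lemma tendsto_cpow_atTop_zero {w : ℂ} (hw : w.re < 0) :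
    Tendsto (fun k : ℕ => ((k + 1 : ℕ) : ℂ) ^ w) atTop (𝓝 0) := by
  rw [tendsto_zero_iff_norm_tendsto_zero]
  have heq : ∀ k : ℕ, ‖((k + 1 : ℕ) : ℂ) ^ w‖ = ((k + 1 : ℕ) : ℝ) ^ w.re := by
    intro k
    rw [show ((k + 1 : ℕ) : ℂ) = (((k + 1 : ℕ) : ℝ) : ℂ) by push_cast; ring,
      Complex.norm_cpow_eq_rpow_re_of_pos (by positivity)]
  simp_rw [heq]
  have h0 : Tendsto (fun x : ℝ => x ^ (-(-w.re))) atTop (𝓝 0) :=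
    tendsto_rpow_neg_atTop (by linarith)
  rw [neg_neg] at h0
  exact h0.comp (tendsto_natCast_atTop_atTop.comp (tendsto_add_atTop_nat 1))

lemma partial_sum_zterm (s : ℂ) (m : ℕ) :
    ∑ n ∈ range m, zterm (n + 1) s
      = ∑ n ∈ Icc 1 m, (n : ℂ) ^ (-s) - (((m + 1 : ℕ) : ℂ) ^ (1 - s) - 1) / (1 - s) := by
  induction m with
  | zero => simp [zterm]
  | succ m ih =>
    rw [Finset.sum_range_succ, ih, Finset.sum_Icc_succ_top (Nat.one_le_iff_ne_zero.2 (Nat.succ_ne_zero m))]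
    unfold zterm
    have hcast : (((m + 1 : ℕ) : ℂ)) + 1 = ((m + 1 + 1 : ℕ) : ℂ) := by push_cast; ring
    rw [hcast]
    ring

lemma hasSum_zterm {s : ℂ} (hs : 1 < s.re) :
    HasSum (fun n : ℕ => zterm (n + 1) s) (riemannZeta s - 1 / (s - 1)) := by
  have hs1 : s ≠ 1 := by
    intro h; rw [h] at hs; simp at hs
  have hA : HasSum (fun n : ℕ => ((n + 1 : ℕ) : ℂ) ^ (-s)) (riemannZeta s) := by
    have hsum : Summable (fun n : ℕ => ((n : ℂ)) ^ (-s)) := by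
      refine (Complex.summable_one_div_nat_cpow.2 hs).congr fun n => ?_
      rw [one_div, ← cpow_neg]
    have hsum1 : Summable (fun n : ℕ => ((n + 1 : ℕ) : ℂ) ^ (-s)) :=
      (summable_nat_add_iff 1).2 hsum
    have h2 := hsum1.hasSum
    have ht : ∑' n : ℕ, ((n + 1 : ℕ) : ℂ) ^ (-s) = riemannZeta s := by
      rw [zeta_eq_tsum_one_div_nat_add_one_cpow hs]
      refine tsum_congr fun n => ?_
      rw [one_div, ← cpow_neg]
      norm_num
    rwa [ht] at h2
  have hsummable : Summable (fun n : ℕ => zterm (n + 1) s) :=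
    zterm_summable (by linarith) hs1
  set B : ℕ → ℂ := fun n =>
    ((((n + 1 : ℕ) : ℂ)) + 1) ^ (1 - s) - ((n + 1 : ℕ) : ℂ) ^ (1 - s)
  have hzB : ∀ n, zterm (n + 1) s = ((n + 1 : ℕ) : ℂ) ^ (-s) - B n / (1 - s) := fun n => rfl
  have hBsum : Summable (fun n => B n / (1 - s)) := by
    refine (hA.summable.sub hsummable).congr fun n => ?_
    rw [hzB]; ring
  have hB : HasSum (fun n => B n / (1 - s)) (1 / (s - 1)) := by
    rw [hBsum.hasSum_iff_tendsto_nat]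
    have hps : ∀ k : ℕ, ∑ n ∈ range k, B n / (1 - s)
        = ((k + 1 : ℕ) : ℂ) ^ (1 - s) / (1 - s) - 1 / (1 - s) := by
      intro k
      have := Finset.sum_range_sub (fun i : ℕ => ((i + 1 : ℕ) : ℂ) ^ (1 - s) / (1 - s)) k
      rw [show (1 : ℂ) / (1 - s) = ((0 + 1 : ℕ) : ℂ) ^ (1 - s) / (1 - s) by
        norm_num, ← this]
      refine Finset.sum_congr rfl fun n _ => ?_
      simp only [B]
      push_cast
      ring
    simp_rw [hps]
    have h0 : Tendsto (fun k : ℕ => ((k + 1 : ℕ) : ℂ) ^ (1 - s)) atTop (𝓝 0) :=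
      tendsto_cpow_atTop_zero (by simp; linarith)
    have := (h0.div_const (1 - s)).sub_const (1 / (1 - s))
    simp only [zero_div, zero_sub] at this
    convert this using 2
    rw [one_div, one_div, ← inv_neg, neg_sub]
  have hfinal := hA.sub hB
  refine hfinal.congr_fun fun n => ?_
  rw [hzB]

lemma U_preconnected_s10 : IsPreconnected {z : ℂ | 0 < z.re ∧ z ≠ 1} := by
  set C1 : Set ℂ := {z | 0 < z.re} ∩ {z | 0 < z.im} with hC1
  set C2 : Set ℂ := {z | 0 < z.re} ∩ {z | z.im < 0} with hC2
  set C3 : Set ℂ := {z | 0 < z.re} ∩ {z | z.re < 1} with hC3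
  set C4 : Set ℂ := {z | 1 < z.re} with hC4
  have p1 : IsPreconnected C1 :=
    ((convex_halfSpace_re_gt 0).inter (convex_halfSpace_im_gt 0)).isPreconnected
  have p2 : IsPreconnected C2 :=
    ((convex_halfSpace_re_gt 0).inter (convex_halfSpace_im_lt 0)).isPreconnected
  have p3 : IsPreconnected C3 :=
    ((convex_halfSpace_re_gt 0).inter (convex_halfSpace_re_lt 1)).isPreconnected
  have p4 : IsPreconnected C4 := (convex_halfSpace_re_gt 1).isPreconnected
  have q13 : IsPreconnected (C1 ∪ C3) := by
    apply IsPreconnected.union (⟨1/2, 1⟩ : ℂ) _ _ p1 p3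
    · constructor <;> norm_num
    · constructor <;> norm_num
  have q132 : IsPreconnected (C1 ∪ C3 ∪ C2) := by
    apply IsPreconnected.union (⟨1/2, -1⟩ : ℂ) _ _ q13 p2
    · apply Set.mem_union_right
      constructor <;> norm_num
    · constructor <;> norm_num
  have q : IsPreconnected (C1 ∪ C3 ∪ C2 ∪ C4) := by
    apply IsPreconnected.union (⟨2, 1⟩ : ℂ) _ _ q132 p4
    · apply Set.mem_union_left; apply Set.mem_union_left
      constructor <;> norm_num
    · norm_num [hC4]
  have hUeq : {z : ℂ | 0 < z.re ∧ z ≠ 1} = C1 ∪ C3 ∪ C2 ∪ C4 := by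
    ext z
    simp only [Set.mem_union, Set.mem_inter_iff, Set.mem_setOf_eq, hC1, hC2, hC3, hC4]
    constructor
    · rintro ⟨hre, hne⟩
      rcases lt_trichotomy z.im 0 with him | him | him
      · exact Or.inl (Or.inr ⟨hre, him⟩)
      · rcases lt_trichotomy z.re 1 with hr | hr | hr
        · exact Or.inl (Or.inl (Or.inr ⟨hre, hr⟩))
        · exact absurd (Complex.ext hr him) hne
        · exact Or.inr hr
      · exact Or.inl (Or.inl (Or.inl ⟨hre, him⟩))
    · rintro (((⟨h₁, h₂⟩ | ⟨h₁, h₂⟩) | ⟨h₁, h₂⟩) | h)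
      · exact ⟨h₁, fun h => by rw [h] at h₂; norm_num at h₂⟩
      · exact ⟨h₁, fun h => by rw [h] at h₂; norm_num at h₂⟩
      · exact ⟨h₁, fun h => by rw [h] at h₂; norm_num at h₂⟩
      · refine ⟨by linarith, fun heq => by rw [heq] at h; norm_num at h⟩
  rw [hUeq]
  exact q

theorem stmt_10 (s : ℂ) (h1 : 0 < s.re) (h2 : s ≠ 1) :
    Tendsto (fun k : ℕ =>
        ∑ n ∈ Finset.Icc 1 (k - 1), (n : ℂ) ^ (-s) - (k : ℂ) ^ (1 - s) / (1 - s))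
      atTop (𝓝 (riemannZeta s)) := by
  set U : Set ℂ := {z : ℂ | 0 < z.re ∧ z ≠ 1} with hU
  have hUopen : IsOpen U := by
    have : U = {z : ℂ | 0 < z.re} ∩ {(1 : ℂ)}ᶜ := by
      ext z; simp only [hU, Set.mem_setOf_eq, Set.mem_inter_iff, Set.mem_compl_iff,
        Set.mem_singleton_iff]
    rw [this]
    exact (isOpen_lt continuous_const Complex.continuous_re).inter isOpen_compl_singleton
  set T : ℂ → ℂ := fun z => ∑' n : ℕ, zterm (n + 1) z with hT
  have hTanalytic : AnalyticOnNhd ℂ T U := by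
    apply DifferentiableOn.analyticOnNhd _ hUopen
    exact fun z hz => (T_diffAt hz.1 hz.2).differentiableWithinAt
  have hZanalytic : AnalyticOnNhd ℂ (fun z => riemannZeta z - 1 / (z - 1)) U := by
    apply DifferentiableOn.analyticOnNhd _ hUopen
    intro z hz
    apply DifferentiableAt.differentiableWithinAt
    exact (differentiableAt_riemannZeta hz.2).sub
      ((differentiableAt_const 1).div ((differentiableAt_id.sub (differentiableAt_const 1)))
        (sub_ne_zero_of_ne hz.2))
  have h2mem : (2 : ℂ) ∈ U := by
    constructor <;> norm_num
  have hev : T =ᶠ[𝓝 (2 : ℂ)] (fun z => riemannZeta z - 1 / (z - 1)) := by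
    have hopen : IsOpen {z : ℂ | 1 < z.re} := isOpen_lt continuous_const Complex.continuous_re
    filter_upwards [hopen.mem_nhds (by norm_num : (2 : ℂ) ∈ {z : ℂ | 1 < z.re})] with z hz
    exact (hasSum_zterm hz).tsum_eq
  have heq := hTanalytic.eqOn_of_preconnected_of_eventuallyEq hZanalytic U_preconnected_s10 h2mem hev
  have hTs : T s = riemannZeta s - 1 / (s - 1) := heq ⟨h1, h2⟩
  have hsum : Summable (fun n : ℕ => zterm (n + 1) s) := zterm_summable h1 h2
  have htend0 : Tendsto (fun k : ℕ => ∑ n ∈ range k, zterm (n + 1) s) atTop (𝓝 (T s)) :=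
    hsum.hasSum.tendsto_sum_nat
  have htend : Tendsto (fun k : ℕ => ∑ n ∈ range (k - 1), zterm (n + 1) s) atTop (𝓝 (T s)) :=
    htend0.comp (tendsto_sub_atTop_nat 1)
  have htend2 : Tendsto (fun k : ℕ => ∑ n ∈ range (k - 1), zterm (n + 1) s - 1 / (1 - s))
      atTop (𝓝 (riemannZeta s)) := by
    have := htend.sub_const (1 / (1 - s))
    have hval : T s - 1 / (1 - s) = riemannZeta s := by
      rw [hTs]
      have : (1 : ℂ) / (1 - s) = -(1 / (s - 1)) := by
        rw [one_div, one_div, ← inv_neg, neg_sub]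
      rw [this]
      ring
    rwa [hval] at this
  apply htend2.congr'
  filter_upwards [eventually_ge_atTop 1] with k hk
  rw [partial_sum_zterm s (k - 1)]
  have hcast : ((k - 1 + 1 : ℕ) : ℂ) = (k : ℂ) := by
    congr 1
    omega
  rw [hcast]
  ring
end

section
/- Let t be a real number such that ζ(1/2 + it) = 0. Then lim_{k→∞} ( Σ_{n=1}^{k-1} n^{-1/2} sin(t·log n) - (√k / (1/4 + t²)) · ( (1/2)·sin(t·log k) - t·cos(t·log k) ) ) = 0. -/
set_option maxHeartbeats 1000000
open Complex Real Finset Filter Topology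

noncomputable def zg (s : ℂ) (n : ℕ) : ℂ :=
  (n : ℂ) ^ (-s) - (((n : ℂ) + 1) ^ (1 - s) - (n : ℂ) ^ (1 - s)) / (1 - s)

lemma zg_bound (s : ℂ) (hsre : 0 < s.re) (hs1 : s ≠ 1) {n : ℕ} (hn : 1 ≤ n) :
    ‖zg s n‖ ≤ ‖s‖ * (n : ℝ) ^ (-1 - s.re) := by
  have hN : (1 : ℝ) ≤ (n : ℝ) := by exact_mod_cast hn
  have hN0 : (0 : ℝ) < (n : ℝ) := by linarith
  set N : ℝ := (n : ℝ) with hNdef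
  set C : ℝ := ‖s‖ * N ^ (-1 - s.re) with hC
  have hC0 : 0 ≤ C := mul_nonneg (norm_nonneg _) (Real.rpow_nonneg hN0.le _)
  -- derivative of χ y = y^(-s) is -s * y^(-s-1)
  have hχ : ∀ x : ℝ, 1 ≤ x → HasDerivAt (fun y : ℝ => (y : ℂ) ^ (-s))
      (-s * (x : ℂ) ^ (-s - 1)) x := by
    intro x hx
    have hx0 : x ≠ 0 := by positivity
    have hs0 : s ≠ 0 := fun hcon => by simp [hcon] at hsre
    have hr : (-s - 1 : ℂ) ≠ -1 := by
      intro hcon; apply hs0; linear_combination -hcon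
    have h1 := (hasDerivAt_ofReal_cpow_const' hx0 hr).const_mul (-s)
    have heq : (fun y : ℝ => -s * ((y : ℂ) ^ (-s - 1 + 1) / (-s - 1 + 1)))
        = fun y : ℝ => (y : ℂ) ^ (-s) := by
      funext y
      have h2 : (-s - 1 + 1 : ℂ) = -s := by ring
      rw [h2]
      field_simp [neg_ne_zero.mpr hs0]
    rwa [heq] at h1
  -- first MVT: ‖x^(-s) - N^(-s)‖ ≤ C * (x - N) on [N, N+1]
  have hd1 : ∀ x ∈ Set.Icc N (N + 1), HasDerivWithinAt (fun y : ℝ => (y : ℂ) ^ (-s))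
      (-s * (x : ℂ) ^ (-s - 1)) (Set.Icc N (N + 1)) x :=
    fun x hx => (hχ x (by linarith [hx.1])).hasDerivWithinAt
  have hb1 : ∀ x ∈ Set.Ico N (N + 1), ‖-s * (x : ℂ) ^ (-s - 1)‖ ≤ C := by
    intro y hy
    have hy1 : (1 : ℝ) ≤ y := by linarith [hy.1]
    have hy0 : (0 : ℝ) < y := by linarith
    rw [norm_mul, norm_neg,
      Complex.norm_cpow_eq_rpow_re_of_pos hy0]
    have hre : (-s - 1).re = -1 - s.re := by simp [Complex.sub_re]; ring
    rw [hre, hC]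
    have hle : y ^ (-1 - s.re) ≤ N ^ (-1 - s.re) :=
      Real.rpow_le_rpow_of_nonpos hN0 hy.1 (by linarith)
    exact mul_le_mul_of_nonneg_left hle (norm_nonneg s)
  have hs0 : s ≠ 0 := fun hcon => by simp [hcon] at hsre
  have step1 := norm_image_sub_le_of_norm_deriv_le_segment' hd1 hb1
  -- second MVT: ψ y = y^(1-s)/(1-s) - N^(-s) * y
  have hψ : ∀ x : ℝ, 1 ≤ x → HasDerivAt
      (fun y : ℝ => (y : ℂ) ^ (1 - s) / (1 - s) - (N : ℂ) ^ (-s) * (y : ℂ))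
      ((x : ℂ) ^ (-s) - (N : ℂ) ^ (-s)) x := by
    intro x hx
    have hx0 : x ≠ 0 := by positivity
    have hr : (-s : ℂ) ≠ -1 := fun hcon => hs1 (by linear_combination -hcon)
    have h1 := hasDerivAt_ofReal_cpow_const' hx0 hr
    have h2 : (-s + 1 : ℂ) = 1 - s := by ring
    rw [h2] at h1
    have h3 : HasDerivAt (fun y : ℝ => ((N : ℂ) ^ (-s)) * (y : ℂ))
        ((N : ℂ) ^ (-s)) x := by
      simpa using ((hasDerivAt_id x).ofReal_comp.const_mul ((N : ℂ) ^ (-s)))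
    exact h1.sub h3
  have hd2 : ∀ x ∈ Set.Icc N (N + 1), HasDerivWithinAt
      (fun y : ℝ => (y : ℂ) ^ (1 - s) / (1 - s) - (N : ℂ) ^ (-s) * (y : ℂ))
      ((x : ℂ) ^ (-s) - (N : ℂ) ^ (-s)) (Set.Icc N (N + 1)) x :=
    fun x hx => (hψ x (by linarith [hx.1])).hasDerivWithinAt
  have hb2 : ∀ x ∈ Set.Ico N (N + 1), ‖(x : ℂ) ^ (-s) - (N : ℂ) ^ (-s)‖ ≤ C := by
    intro x hx
    have := step1 x (Set.Ico_subset_Icc_self hx)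
    have hxN : x - N ≤ 1 := by linarith [hx.2]
    nlinarith [this]
  have step2 := norm_image_sub_le_of_norm_deriv_le_segment' hd2 hb2 (N + 1)
    (Set.right_mem_Icc.mpr (by linarith))
  rw [show N + 1 - N = 1 by ring, mul_one] at step2
  have key : ((N + 1 : ℝ) : ℂ) ^ (1 - s) / (1 - s) - (N : ℂ) ^ (-s) * ((N + 1 : ℝ) : ℂ)
      - ((N : ℂ) ^ (1 - s) / (1 - s) - (N : ℂ) ^ (-s) * (N : ℂ)) = -(zg s n) := by
    rw [zg]
    push_cast [hNdef]
    ring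
  rw [key, norm_neg] at step2
  exact step2

noncomputable def Zfun (s : ℂ) : ℂ := ∑' n : ℕ, zg s (n + 1)

lemma zg_summable {s : ℂ} (hsre : 0 < s.re) (hs1 : s ≠ 1) :
    Summable (fun n : ℕ => zg s (n + 1)) := by
  have hb : Summable (fun n : ℕ => ‖s‖ * ((n : ℝ) + 1) ^ (-1 - s.re)) := by
    apply Summable.mul_left
    have h0 : Summable (fun n : ℕ => (n : ℝ) ^ (-1 - s.re)) :=
      Real.summable_nat_rpow.mpr (by linarith)
    have := (summable_nat_add_iff 1).mpr h0
    refine this.congr fun n => ?_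
    push_cast
    ring_nf
  refine Summable.of_norm_bounded hb fun n => ?_
  have := zg_bound s hsre hs1 (n := n + 1) (by omega)
  simpa using this

lemma sum_zg_eq {s : ℂ} (hs1 : s ≠ 1) {k : ℕ} (hk : 1 ≤ k) :
    ∑ n ∈ Finset.Icc 1 (k - 1), (n : ℂ) ^ (-s) - (k : ℂ) ^ (1 - s) / (1 - s)
      = (∑ i ∈ Finset.range (k - 1), zg s (i + 1)) - 1 / (1 - s) := by
  have h1 : (1 : ℂ) - s ≠ 0 := fun hcon => hs1 (by linear_combination -hcon)
  have hIcc : Finset.Icc 1 (k - 1) = Finset.Ico 1 k := by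
    rw [← Finset.Ico_add_one_right_eq_Icc]
    congr 1
    omega
  have htel : ∑ i ∈ Finset.range (k - 1),
      ((((i + 1 : ℕ) : ℂ) + 1) ^ (1 - s) - ((i + 1 : ℕ) : ℂ) ^ (1 - s))
      = (k : ℂ) ^ (1 - s) - 1 := by
    have := Finset.sum_range_sub (fun i : ℕ => ((i : ℂ) + 1) ^ (1 - s)) (k - 1)
    simp only [Nat.cast_add, Nat.cast_one] at this ⊢
    rw [this]
    have hcast : ((k - 1 : ℕ) : ℂ) + 1 = (k : ℂ) := by
      have : ((k - 1 : ℕ) : ℂ) = (k : ℂ) - 1 := by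
        push_cast [Nat.cast_sub hk]; ring
      rw [this]; ring
    rw [hcast]
    simp
  have hsum : ∑ n ∈ Finset.Icc 1 (k - 1), (n : ℂ) ^ (-s)
      = ∑ i ∈ Finset.range (k - 1), ((i + 1 : ℕ) : ℂ) ^ (-s) := by
    rw [hIcc, Finset.sum_Ico_eq_sum_range]
    refine Finset.sum_congr rfl fun i _ => by rw [add_comm 1 i]
  rw [hsum]
  simp only [zg, Finset.sum_sub_distrib, ← Finset.sum_div, htel]
  field_simp
  ring

lemma tendsto_partial {s : ℂ} (hsre : 0 < s.re) (hs1 : s ≠ 1) :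
    Tendsto (fun k : ℕ =>
        ∑ n ∈ Finset.Icc 1 (k - 1), (n : ℂ) ^ (-s) - (k : ℂ) ^ (1 - s) / (1 - s))
      atTop (𝓝 (Zfun s - 1 / (1 - s))) := by
  have hsum := zg_summable hsre hs1
  have h1 : Tendsto (fun m : ℕ => ∑ i ∈ Finset.range m, zg s (i + 1)) atTop (𝓝 (Zfun s)) :=
    hsum.hasSum.tendsto_sum_nat
  have h2 : Tendsto (fun k : ℕ => ∑ i ∈ Finset.range (k - 1), zg s (i + 1)) atTop
      (𝓝 (Zfun s)) := h1.comp (tendsto_sub_atTop_nat 1)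
  have h3 := h2.sub_const (1 / (1 - s))
  refine h3.congr' ?_
  filter_upwards [eventually_ge_atTop 1] with k hk
  exact (sum_zg_eq hs1 hk).symm

lemma Zfun_eq {s : ℂ} (hs : 1 < s.re) : Zfun s - 1 / (1 - s) = riemannZeta s := by
  have hsre : 0 < s.re := by linarith
  have hs1 : s ≠ 1 := fun hcon => by simp [hcon] at hs
  refine tendsto_nhds_unique (tendsto_partial hsre hs1) ?_
  -- direct limit for re s > 1
  have hsummable : Summable (fun n : ℕ => 1 / ((n : ℂ) + 1) ^ s) := by
    have h0 : Summable (fun n : ℕ => 1 / (n : ℂ) ^ s) :=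
      Complex.summable_one_div_nat_cpow.mpr hs
    have := (summable_nat_add_iff 1).mpr h0
    refine this.congr fun n => by push_cast; ring_nf
  have hzeta : riemannZeta s = ∑' n : ℕ, 1 / ((n : ℂ) + 1) ^ s := by
    rw [zeta_eq_tsum_one_div_nat_add_one_cpow hs]

  have hP0 : Tendsto (fun m : ℕ => ∑ i ∈ Finset.range m, 1 / ((i : ℂ) + 1) ^ s) atTop
      (𝓝 (riemannZeta s)) := by
    rw [hzeta]; exact hsummable.hasSum.tendsto_sum_nat
  have hP : Tendsto (fun k : ℕ => ∑ n ∈ Finset.Icc 1 (k - 1), (n : ℂ) ^ (-s)) atTop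
      (𝓝 (riemannZeta s)) := by
    refine (hP0.comp (tendsto_sub_atTop_nat 1)).congr' ?_
    filter_upwards [eventually_ge_atTop 1] with k hk
    have hIcc : Finset.Icc 1 (k - 1) = Finset.Ico 1 k := by
      rw [← Finset.Ico_add_one_right_eq_Icc]; congr 1; omega
    rw [Function.comp_apply, hIcc, Finset.sum_Ico_eq_sum_range]
    refine Finset.sum_congr rfl fun i _ => ?_
    rw [Complex.cpow_neg, one_div]
    push_cast
    rw [add_comm 1 (i : ℂ)]
  have hQ : Tendsto (fun k : ℕ => (k : ℂ) ^ (1 - s) / (1 - s)) atTop (𝓝 0) := by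
    rw [tendsto_zero_iff_norm_tendsto_zero]
    have hb : Tendsto (fun k : ℕ => (k : ℝ) ^ (1 - s.re) / ‖(1 : ℂ) - s‖) atTop (𝓝 0) := by
      have h4 : Tendsto (fun x : ℝ => x ^ (-(s.re - 1))) atTop (𝓝 0) :=
        tendsto_rpow_neg_atTop (by linarith)
      have h5 := (h4.comp tendsto_natCast_atTop_atTop).div_const ‖(1 : ℂ) - s‖
      simpa [neg_sub] using h5
    refine squeeze_zero' ?_ ?_ hb
    · exact Eventually.of_forall fun k => norm_nonneg _
    · filter_upwards [eventually_ge_atTop 1] with k hk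
      rw [norm_div, Complex.norm_natCast_cpow_of_pos (by omega)]
      simp [Complex.sub_re]
  simpa using hP.sub hQ

lemma Zfun_diff {s₀ : ℂ} (hsre : 0 < s₀.re) (hs1 : s₀ ≠ 1) :
    DifferentiableAt ℂ Zfun s₀ := by
  set r : ℝ := min 1 (min (s₀.re / 2) (‖s₀ - 1‖ / 2)) with hr
  have hs10 : ‖s₀ - 1‖ > 0 := by
    have h := sub_ne_zero.mpr hs1
    exact norm_pos_iff.mpr h
  have hr0 : 0 < r := by
    apply lt_min one_pos
    apply lt_min (by linarith) (by linarith)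
  set σ : ℝ := s₀.re / 2 with hσ
  have hσ0 : 0 < σ := by positivity
  set M : ℝ := ‖s₀‖ + 1 with hM
  -- properties of the ball
  have hball : ∀ s ∈ Metric.ball s₀ r, σ < s.re ∧ s ≠ 1 ∧ ‖s‖ ≤ M := by
    intro s hs
    rw [Metric.mem_ball, dist_eq_norm] at hs
    have h1 : |(s - s₀).re| ≤ ‖s - s₀‖ := Complex.abs_re_le_norm _
    have h2 : (s - s₀).re = s.re - s₀.re := by simp [Complex.sub_re]
    have hrle1 : r ≤ 1 := min_le_left _ _
    have hrle2 : r ≤ s₀.re / 2 := le_trans (min_le_right _ _) (min_le_left _ _)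
    have hrle3 : r ≤ ‖s₀ - 1‖ / 2 := le_trans (min_le_right _ _) (min_le_right _ _)
    refine ⟨?_, ?_, ?_⟩
    · rw [h2] at h1
      have := abs_le.mp h1
      simp only [hσ]
      linarith [this.1]
    · intro hcon
      rw [hcon] at hs
      have : ‖s₀ - 1‖ = ‖(1 : ℂ) - s₀‖ := by rw [← norm_neg]; ring_nf
      rw [← this] at hs
      linarith
    · calc ‖s‖ = ‖s₀ + (s - s₀)‖ := by ring_nf
        _ ≤ ‖s₀‖ + ‖s - s₀‖ := norm_add_le _ _
        _ ≤ M := by simp only [hM]; linarith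
  -- summable bound
  have hu : Summable (fun n : ℕ => M * ((n : ℝ) + 1) ^ (-1 - σ)) := by
    apply Summable.mul_left
    have h0 : Summable (fun n : ℕ => (n : ℝ) ^ (-1 - σ)) :=
      Real.summable_nat_rpow.mpr (by linarith)
    have := (summable_nat_add_iff 1).mpr h0
    refine this.congr fun n => ?_
    push_cast
    ring_nf
  -- each term differentiable
  have hf : ∀ n : ℕ, DifferentiableOn ℂ (fun s => zg s (n + 1)) (Metric.ball s₀ r) := by
    intro n
    intro s hs
    obtain ⟨-, hs1', -⟩ := hball s hs
    apply DifferentiableAt.differentiableWithinAt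
    have hc : ((n + 1 : ℕ) : ℂ) ≠ 0 := Nat.cast_ne_zero.mpr (by omega)
    have hc1 : ((n + 1 : ℕ) : ℂ) + 1 ≠ 0 := by
      have he : ((n + 1 : ℕ) : ℂ) + 1 = ((n + 2 : ℕ) : ℂ) := by push_cast; ring
      rw [he]
      exact Nat.cast_ne_zero.mpr (by omega)
    have hd1 : DifferentiableAt ℂ (fun s : ℂ => ((n + 1 : ℕ) : ℂ) ^ (-s)) s :=
      (differentiable_neg.differentiableAt).const_cpow (Or.inl hc)
    have hd2 : DifferentiableAt ℂ (fun s : ℂ => (((n + 1 : ℕ) : ℂ) + 1) ^ (1 - s)) s :=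
      ((differentiable_const (1:ℂ)).sub differentiable_id).differentiableAt.const_cpow
        (Or.inl hc1)
    have hd3 : DifferentiableAt ℂ (fun s : ℂ => ((n + 1 : ℕ) : ℂ) ^ (1 - s)) s :=
      ((differentiable_const (1:ℂ)).sub differentiable_id).differentiableAt.const_cpow
        (Or.inl hc)
    have hd4 : DifferentiableAt ℂ (fun s : ℂ => (1 : ℂ) - s) s :=
      ((differentiable_const (1:ℂ)).sub differentiable_id).differentiableAt
    exact (hd1.sub ((hd2.sub hd3).div hd4 (sub_ne_zero.mpr (Ne.symm hs1'))))
  -- uniform bound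
  have hF : ∀ (n : ℕ) (w : ℂ), w ∈ Metric.ball s₀ r →
      ‖zg w (n + 1)‖ ≤ M * ((n : ℝ) + 1) ^ (-1 - σ) := by
    intro n w hw
    obtain ⟨hw1, hw2, hw3⟩ := hball w hw
    have hb := zg_bound w (by linarith) hw2 (n := n + 1) (by omega)
    refine hb.trans ?_
    have h1 : ((n + 1 : ℕ) : ℝ) ^ (-1 - w.re) ≤ ((n : ℝ) + 1) ^ (-1 - σ) := by
      push_cast
      exact Real.rpow_le_rpow_of_exponent_le (by push_cast; linarith [Nat.cast_nonneg (α := ℝ) n])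
        (by linarith)
    exact mul_le_mul hw3 h1 (Real.rpow_nonneg (by positivity) _) (by positivity)
  have := differentiableOn_tsum_of_summable_norm hu hf Metric.isOpen_ball hF
  have hZ : DifferentiableOn ℂ Zfun (Metric.ball s₀ r) := by
    refine this.congr fun s hs => rfl
  exact (hZ.differentiableAt (Metric.isOpen_ball.mem_nhds (Metric.mem_ball_self hr0)))

def Uset : Set ℂ := {s : ℂ | 0 < s.re ∧ s ≠ 1}

lemma Uset_open : IsOpen Uset := by
  have h1 : IsOpen {s : ℂ | 0 < s.re} := by
    exact isOpen_lt continuous_const Complex.continuous_re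
  have h2 : IsOpen {s : ℂ | s ≠ 1} := isOpen_compl_singleton
  exact h1.inter h2

lemma segment_re_pos {a b : ℂ} (ha : 0 < a.re) (hb : 0 < b.re) {z : ℂ}
    (hz : z ∈ segment ℝ a b) : 0 < z.re := by
  obtain ⟨u, v, hu, hv, huv, rfl⟩ := hz
  simp only [Complex.add_re, Complex.smul_re, smul_eq_mul]
  rcases eq_or_lt_of_le hu with hu0 | hu0
  · have hv1 : v = 1 := by linarith
    rw [← hu0, hv1]; simpa using hb
  · nlinarith [mul_pos hu0 ha, mul_nonneg hv hb.le]

lemma segment_im_const {a b : ℂ} (hab : a.im = b.im) {z : ℂ}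
    (hz : z ∈ segment ℝ a b) : z.im = a.im := by
  obtain ⟨u, v, hu, hv, huv, rfl⟩ := hz
  simp only [Complex.add_im, Complex.smul_im, smul_eq_mul]
  rw [← hab, ← add_mul, huv, one_mul]

lemma segment_re_const {a b : ℂ} (hab : a.re = b.re) {z : ℂ}
    (hz : z ∈ segment ℝ a b) : z.re = a.re := by
  obtain ⟨u, v, hu, hv, huv, rfl⟩ := hz
  simp only [Complex.add_re, Complex.smul_re, smul_eq_mul]
  rw [← hab, ← add_mul, huv, one_mul]

lemma joinedIn_of_segment {U : Set ℂ} {a b : ℂ} (h : segment ℝ a b ⊆ U) :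
    JoinedIn U a b := by
  have hconv : Convex ℝ (segment ℝ a b) := convex_segment a b
  have hpc : IsPathConnected (segment ℝ a b) :=
    hconv.isPathConnected ⟨a, left_mem_segment ℝ a b⟩
  exact (hpc.joinedIn a (left_mem_segment ℝ a b) b (right_mem_segment ℝ a b)).mono h

lemma Uset_preconnected : IsPreconnected Uset := by
  have hpath : IsPathConnected Uset := by
    have h2U : (2 : ℂ) ∈ Uset := by
      constructor
      · simp
      · intro hcon
        have := congrArg Complex.re hcon
        simp at this
    refine ⟨2, h2U, fun {a} ha => ?_⟩
    obtain ⟨hare, hane⟩ := ha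
    have key : ∀ z ∈ Uset, z.im ≠ 0 ∨ (z.im = 0 ∧ z ≠ 1) → True := fun _ _ _ => trivial
    by_cases him : a.im = 0
    · -- a is real, positive, ≠ 1 : go up, across, down
      have j1 : JoinedIn Uset a (a + Complex.I) := by
        apply joinedIn_of_segment
        intro z hz
        have hre : z.re = a.re := segment_re_const (by simp) hz
        constructor
        · rw [hre]; exact hare
        · intro hcon
          rw [hcon] at hre
          simp at hre
          apply hane
          apply Complex.ext
          · exact hre.symm
          · simp [him]
      have j2 : JoinedIn Uset (a + Complex.I) (2 + Complex.I) := by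
        apply joinedIn_of_segment
        intro z hz
        have hzim : z.im = (a + Complex.I).im := segment_im_const (by simp [him]) hz
        have him1 : z.im = 1 := by simpa [him] using hzim
        constructor
        · exact segment_re_pos (by simpa using hare) (by norm_num) hz
        · intro hcon
          rw [hcon] at him1
          simp at him1
      have j3 : JoinedIn Uset (2 + Complex.I) 2 := by
        apply joinedIn_of_segment
        intro z hz
        have hre : z.re = (2 + Complex.I).re := segment_re_const (by simp) hz
        have hre2 : z.re = 2 := by simpa using hre
        constructor
        · rw [hre2]; norm_num
        · intro hcon
          rw [hcon] at hre2
          simp at hre2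
      exact ((j1.trans j2).trans j3).symm
    · -- im a ≠ 0 : go across, then down
      have j1 : JoinedIn Uset a (2 + a.im * Complex.I) := by
        apply joinedIn_of_segment
        intro z hz
        have hzim : z.im = a.im := segment_im_const (by simp) hz
        constructor
        · exact segment_re_pos hare (by simp) hz
        · intro hcon
          rw [hcon] at hzim
          simp at hzim
          exact him hzim.symm
      have j2 : JoinedIn Uset (2 + a.im * Complex.I) 2 := by
        apply joinedIn_of_segment
        intro z hz
        have hre : z.re = (2 + (a.im : ℂ) * Complex.I).re := segment_re_const (by simp) hz
        have hre2 : z.re = 2 := by simpa using hre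
        constructor
        · rw [hre2]; norm_num
        · intro hcon
          rw [hcon] at hre2
          simp at hre2
      exact (j1.trans j2).symm
  exact hpath.isConnected.isPreconnected

lemma main_tendsto {s : ℂ} (hsre : 0 < s.re) (hs1 : s ≠ 1) :
    Tendsto (fun k : ℕ =>
        ∑ n ∈ Finset.Icc 1 (k - 1), (n : ℂ) ^ (-s) - (k : ℂ) ^ (1 - s) / (1 - s))
      atTop (𝓝 (riemannZeta s)) := by
  have hf : AnalyticOnNhd ℂ (fun s => Zfun s - 1 / (1 - s)) Uset := by
    apply DifferentiableOn.analyticOnNhd _ Uset_open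
    intro z hz
    apply DifferentiableAt.differentiableWithinAt
    refine (Zfun_diff hz.1 hz.2).sub ?_
    refine (differentiable_const (1:ℂ)).differentiableAt.div ?_ (sub_ne_zero.mpr (Ne.symm hz.2))
    exact ((differentiable_const (1:ℂ)).sub differentiable_id).differentiableAt
  have hg : AnalyticOnNhd ℂ riemannZeta Uset := by
    apply DifferentiableOn.analyticOnNhd _ Uset_open
    exact fun z hz => (differentiableAt_riemannZeta hz.2).differentiableWithinAt
  have h2U : (2 : ℂ) ∈ Uset := by
    constructor
    · simp
    · intro hcon
      have := congrArg Complex.re hcon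
      simp at this
  have hev : (fun s => Zfun s - 1 / (1 - s)) =ᶠ[𝓝 (2 : ℂ)] riemannZeta := by
    have hopen : IsOpen {s : ℂ | 1 < s.re} := isOpen_lt continuous_const Complex.continuous_re
    have h2 : (2 : ℂ) ∈ {s : ℂ | 1 < s.re} := by simp
    filter_upwards [hopen.mem_nhds h2] with z hz
    exact Zfun_eq hz
  have hEq := hf.eqOn_of_preconnected_of_eventuallyEq hg Uset_preconnected h2U hev
  have := hEq (Set.mem_setOf.mpr ⟨hsre, hs1⟩)
  rw [← this]
  exact tendsto_partial hsre hs1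

lemma cpow_im_ofReal {x : ℝ} (hx : 0 < x) (a b : ℝ) :
    (((x : ℂ)) ^ ((a : ℂ) + (b : ℂ) * Complex.I)).im
      = x ^ a * Real.sin (b * Real.log x) := by
  rw [Complex.cpow_def_of_ne_zero (by exact_mod_cast hx.ne'), ← Complex.ofReal_log hx.le,
    Complex.exp_im]
  congr 1
  · rw [Real.rpow_def_of_pos hx a]
    congr 1
    simp [Complex.mul_re]
  · congr 1
    simp [Complex.mul_im, mul_comm]

lemma cpow_re_ofReal {x : ℝ} (hx : 0 < x) (a b : ℝ) :
    (((x : ℂ)) ^ ((a : ℂ) + (b : ℂ) * Complex.I)).re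
      = x ^ a * Real.cos (b * Real.log x) := by
  rw [Complex.cpow_def_of_ne_zero (by exact_mod_cast hx.ne'), ← Complex.ofReal_log hx.le,
    Complex.exp_re]
  congr 1
  · rw [Real.rpow_def_of_pos hx a]
    congr 1
    simp [Complex.mul_re]
  · congr 1
    simp [Complex.mul_im, mul_comm]

theorem stmt_13 (t : ℝ) (h : riemannZeta (1 / 2 + t * Complex.I) = 0) :
    Tendsto (fun k : ℕ =>
        ∑ n ∈ Finset.Icc 1 (k - 1), (n : ℝ) ^ (-(1 / 2 : ℝ)) * Real.sin (t * Real.log n)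
          - (Real.sqrt k / (1 / 4 + t ^ 2))
              * ((1 / 2) * Real.sin (t * Real.log k) - t * Real.cos (t * Real.log k)))
      atTop (𝓝 0) := by
  set s₀ : ℂ := 1 / 2 + (t : ℂ) * Complex.I with hs₀
  have hre : s₀.re = 1 / 2 := by simp [hs₀]
  have him0 : s₀.im = t := by simp [hs₀]
  have hs1 : s₀ ≠ 1 := by
    intro hc
    have h2 := congrArg Complex.re hc
    rw [hre] at h2
    norm_num at h2
  have h1s : (1 : ℂ) - s₀ ≠ 0 := fun hc => hs1 (by linear_combination -hc)
  have hmain := main_tendsto (s := s₀) (by rw [hre]; norm_num) hs1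
  rw [h] at hmain
  have himt : Tendsto (fun k : ℕ =>
      -((∑ n ∈ Finset.Icc 1 (k - 1), (n : ℂ) ^ (-s₀)
        - (k : ℂ) ^ (1 - s₀) / (1 - s₀)).im)) atTop (𝓝 0) := by
    have h2 := (Complex.continuous_im.tendsto 0).comp hmain
    simpa using h2.neg
  refine himt.congr fun k => ?_
  rcases Nat.eq_zero_or_pos k with hk | hk
  · subst hk
    simp [Complex.zero_cpow h1s]
  -- k ≥ 1
  have hk0 : (0 : ℝ) < (k : ℝ) := by exact_mod_cast hk
  have hterm : ∀ n ∈ Finset.Icc 1 (k - 1),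
      ((n : ℂ) ^ (-s₀)).im = -((n : ℝ) ^ (-(1 / 2 : ℝ)) * Real.sin (t * Real.log n)) := by
    intro n hn
    have hn1 : 1 ≤ n := (Finset.mem_Icc.mp hn).1
    have hn0 : (0 : ℝ) < (n : ℝ) := by exact_mod_cast hn1
    have he : -s₀ = ((-(1 / 2) : ℝ) : ℂ) + ((-t : ℝ) : ℂ) * Complex.I := by
      rw [hs₀]; push_cast; ring
    rw [show ((n : ℂ)) = (((n : ℝ) : ℂ)) by push_cast; rfl, he, cpow_im_ofReal hn0]
    rw [neg_mul, Real.sin_neg]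
    ring
  have hwre : ((k : ℂ) ^ (1 - s₀)).re = Real.sqrt k * Real.cos (t * Real.log k) := by
    have he : 1 - s₀ = (((1 / 2) : ℝ) : ℂ) + ((-t : ℝ) : ℂ) * Complex.I := by
      rw [hs₀]; push_cast; ring
    rw [show ((k : ℂ)) = (((k : ℝ) : ℂ)) by push_cast; rfl, he, cpow_re_ofReal hk0]
    rw [neg_mul, Real.cos_neg, Real.sqrt_eq_rpow]
  have hwim : ((k : ℂ) ^ (1 - s₀)).im = -(Real.sqrt k * Real.sin (t * Real.log k)) := by
    have he : 1 - s₀ = (((1 / 2) : ℝ) : ℂ) + ((-t : ℝ) : ℂ) * Complex.I := by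
      rw [hs₀]; push_cast; ring
    rw [show ((k : ℂ)) = (((k : ℝ) : ℂ)) by push_cast; rfl, he, cpow_im_ofReal hk0]
    rw [neg_mul, Real.sin_neg, Real.sqrt_eq_rpow]
    ring
  have hcre : ((1 : ℂ) - s₀).re = 1 / 2 := by rw [Complex.sub_re, Complex.one_re, hre]; norm_num
  have hcim : ((1 : ℂ) - s₀).im = -t := by rw [Complex.sub_im, Complex.one_im, him0]; ring
  have hnormSq : Complex.normSq (1 - s₀) = 1 / 4 + t ^ 2 := by
    rw [Complex.normSq_apply, hcre, hcim]
    ring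
  rw [Complex.sub_im, Complex.im_sum, Finset.sum_congr rfl hterm, Complex.div_im,
    hwre, hwim, hcre, hcim, hnormSq, Finset.sum_neg_distrib]
  ring
end
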